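/- arXiv:1204.3197 — 3 statements merged into one kernel-verified Lean document; each statement's English description precedes it below -/
import Mathlib

section
/- In the grouping construction with spacing parameter M (an integer ≥ 3) applied to ξ distributed according to ℙ_p, if 64pM² < 1 then for every z ∈ ℤ_+ and every k ≥ 1, ℙ_p(there exists a cluster C of level ≥ 1 with start-point α(C) = z and mass m(C) = k) ≤ 32(2pM)^k / ((1 − 4pM²)(1 − 64pM²)). -/
open Filter Set MeasureTheory
open scoped ENNReal NNReal

namespace Paper

/-! ### Binary sequences and compatibility -/

/-- Delete the `i`-th entry of a sequence, shifting everything to the right of it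
one step to the left. -/
def deleteAt {α : Type*} (ξ : ℕ → α) (i : ℕ) : ℕ → α :=
  fun j => if j < i then ξ j else ξ (j + 1)

/-- The annihilation operator `Δ_i^0` on binary sequences: delete the `i`-th digit
if it is a zero (`false`), otherwise do nothing. -/
def delta0 (ξ : ℕ → Bool) (i : ℕ) : ℕ → Bool :=
  if ξ i = false then deleteAt ξ i else ξ

/-- The annihilation operator `Δ_i^1` on binary sequences: delete the `i`-th digit
if it is a one (`true`), otherwise do nothing. -/
def delta1 (ξ : ℕ → Bool) (i : ℕ) : ℕ → Bool :=
  if ξ i = true then deleteAt ξ i else ξ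

/-- `Reach1 η η'` : `η'` is obtained from `η` by finitely many applications of
operators `Δ_·^1`. -/
def Reach1 : (ℕ → Bool) → (ℕ → Bool) → Prop :=
  Relation.ReflTransGen fun a b => ∃ i, b = delta1 a i

/-- `Reach0 ξ ξ'` : `ξ'` is obtained from `ξ` by finitely many applications of
operators `Δ_·^0`. -/
def Reach0 : (ℕ → Bool) → (ℕ → Bool) → Prop :=
  Relation.ReflTransGen fun a b => ∃ i, b = delta0 a i

/-- Compatibility of an ordered pair of binary sequences: one can delete ones from `η`
and zeroes from `ξ` so that the resulting sequences converge (in the product topology)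
to a common limit. -/
def Compatible (η ξ : ℕ → Bool) : Prop :=
  ∃ (ηs ξs : ℕ → ℕ → Bool) (l : ℕ → Bool),
    (∀ k, Reach1 η (ηs k)) ∧ (∀ k, Reach0 ξ (ξs k)) ∧
      Tendsto ηs atTop (nhds l) ∧ Tendsto ξs atTop (nhds l)

/-- `μ` is the product Bernoulli measure on `{0,1}^ℕ` with parameter `p`. -/
def IsBernoulliProduct (μ : Measure (ℕ → Bool)) (p : ℝ) : Prop :=
  IsProbabilityMeasure μ ∧
    ∀ (s : Finset ℕ) (b : ℕ → Bool),
      μ {ξ | ∀ i ∈ s, ξ i = b i} = ∏ i ∈ s, ENNReal.ofReal (if b i then p else 1 - p)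

/-- The set `Ξ_∞` of binary sequences with infinitely many ones and infinitely many
zeroes. -/
def Xinf (ξ : ℕ → Bool) : Prop :=
  (∀ n, ∃ m, n ≤ m ∧ ξ m = true) ∧ ∀ n, ∃ m, n ≤ m ∧ ξ m = false

/-- Length of the run of ones of `ξ` starting at position `n` (junk value `0` if the
run is infinite). -/
noncomputable def runLen (ξ : ℕ → Bool) (n : ℕ) : ℕ :=
  letI := Classical.dec (∃ k, ξ (n + k) = false)
  if h : ∃ k, ξ (n + k) = false then Nat.find h else 0

/-- The position in `ξ` at which the `j`-th letter of the weighted word `f ξ` starts. -/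
noncomputable def fpos (ξ : ℕ → Bool) : ℕ → ℕ
  | 0 => 0
  | j + 1 => fpos ξ j + max (runLen ξ (fpos ξ j)) 1

/-- The run-length map `f : Ξ_∞ → Ψ`, replacing each maximal run of ones by a single
letter whose weight is the length of the run (zeroes being kept as letters of
weight `0`). -/
noncomputable def fmap (ξ : ℕ → Bool) : ℕ → ℕ :=
  fun j => runLen ξ (fpos ξ j)

/-! ### Weighted words -/

/-- The set `Ψ` of weighted words: a weight `≥ 1` is always followed by a weight `0`. -/
def Psi (ψ : ℕ → ℕ) : Prop := ∀ i, 1 ≤ ψ i → ψ (i + 1) = 0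

/-- The annihilation operator `Δ_i^0` on weighted words. -/
def pdelta0 (ψ : ℕ → ℕ) (i : ℕ) : ℕ → ℕ :=
  if ψ i ≠ 0 then ψ
  else if i = 0 ∨ ψ (i - 1) = 0 ∨ ψ (i + 1) = 0 then deleteAt ψ i
  else fun j => if j + 1 < i then ψ j else if j + 1 = i then ψ (i - 1) + ψ (i + 1) else ψ (j + 2)

/-- The annihilation operator `Δ_i^1` on weighted words. -/
def pdelta1 (ψ : ℕ → ℕ) (i : ℕ) : ℕ → ℕ :=
  if ψ i = 0 then ψ
  else if ψ i = 1 then deleteAt ψ i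
  else Function.update ψ i (ψ i - 1)

/-- Finitely many applications of operators `Δ_·^1` on weighted words. -/
def PReach1 : (ℕ → ℕ) → (ℕ → ℕ) → Prop :=
  Relation.ReflTransGen fun a b => ∃ i, b = pdelta1 a i

/-- Finitely many applications of operators `Δ_·^0` on weighted words. -/
def PReach0 : (ℕ → ℕ) → (ℕ → ℕ) → Prop :=
  Relation.ReflTransGen fun a b => ∃ i, b = pdelta0 a i

/-- Compatibility of an ordered pair of weighted words. -/
def CompatibleP (ζ ψ : ℕ → ℕ) : Prop :=
  ∃ (ζs ψs : ℕ → ℕ → ℕ) (l : ℕ → ℕ),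
    (∀ k, PReach1 ζ (ζs k)) ∧ (∀ k, PReach0 ψ (ψs k)) ∧
      (∀ k, Psi (ζs k)) ∧ (∀ k, Psi (ψs k)) ∧
      Tendsto ζs atTop (nhds l) ∧ Tendsto ψs atTop (nhds l)

/-! ### The oriented percolation process -/

/-- Oriented edges of the graph `G`: from `u` to `u + (0,1)` and from `u` to `u + (1,1)`. -/
def IsStep (u v : ℕ × ℕ) : Prop :=
  (v.1 = u.1 ∧ v.2 = u.2 + 1) ∨ (v.1 = u.1 + 1 ∧ v.2 = u.2 + 1)

/-- Open vertices of the configuration `ω_{ζ,ψ}`.  (Sequences are `0`-indexed in this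
formalization, so the entry of `ζ` at the paper's position `v₁ ≥ 1` is `ζ (v₁ - 1)`.) -/
def OpenV (ζ ψ : ℕ → ℕ) (v : ℕ × ℕ) : Prop :=
  v = (0, 0) ∨ (1 ≤ v.1 ∧ 1 ≤ v.2 ∧ ψ (v.2 - 1) ≤ ζ (v.1 - 1))

/-- Heavy vertices: `v₂ = 0`, or the row weight `ψ_{v₂}` is positive. -/
def Heavy (ψ : ℕ → ℕ) (v : ℕ × ℕ) : Prop := v.2 = 0 ∨ 1 ≤ ψ (v.2 - 1)

/-- `π 0, π 1, …, π n` is an open oriented path in `ω_{ζ,ψ}`. -/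
def IsOpenPath (ζ ψ : ℕ → ℕ) (π : ℕ → ℕ × ℕ) (n : ℕ) : Prop :=
  (∀ i < n, IsStep (π i) (π (i + 1))) ∧ ∀ i ≤ n, OpenV ζ ψ (π i)

/-- The path `π 0, …, π n` is permitted: any two distinct heavy vertices on it have
different first coordinates. -/
def IsPermitted (ψ : ℕ → ℕ) (π : ℕ → ℕ × ℕ) (n : ℕ) : Prop :=
  ∀ i ≤ n, ∀ j ≤ n, π i ≠ π j → Heavy ψ (π i) → Heavy ψ (π j) → (π i).1 ≠ (π j).1

/-- There is an infinite open permitted oriented path starting from the origin in the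
percolation configuration `ω_{ζ,ψ}`. -/
def InfOpenPermitted (ζ ψ : ℕ → ℕ) : Prop :=
  ∃ π : ℕ → ℕ × ℕ, π 0 = (0, 0) ∧ (∀ n, IsStep (π n) (π (n + 1))) ∧
    (∀ n, OpenV ζ ψ (π n)) ∧
    ∀ i j, π i ≠ π j → Heavy ψ (π i) → Heavy ψ (π j) → (π i).1 ≠ (π j).1

/-- `V_{⟨ζ,ψ⟩}(c)`: vertices in row `c` reachable from the origin by an open permitted
oriented path. -/
def Vset (ζ ψ : ℕ → ℕ) (c : ℕ) : Set (ℕ × ℕ) :=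
  {v | v.2 = c ∧ ∃ (π : ℕ → ℕ × ℕ) (n : ℕ), π 0 = (0, 0) ∧ π n = v ∧
    IsOpenPath ζ ψ π n ∧ IsPermitted ψ π n}

/-- The open oriented cluster of the origin in `ω_{ζ,ψ}`. -/
def ClusterO (ζ ψ : ℕ → ℕ) : Set (ℕ × ℕ) :=
  {v | ∃ (π : ℕ → ℕ × ℕ) (n : ℕ), π 0 = (0, 0) ∧ π n = v ∧ IsOpenPath ζ ψ π n}

/-- The horizontal slab `S_{[a,b]}`. -/
def Slab (a b : ℕ) : Set (ℕ × ℕ) := {v | a ≤ v.2 ∧ v.2 ≤ b}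

/-- The horizontal discrete segment in row `c` with endpoints `a` and `b`. -/
def HSeg (c a b : ℕ) : Set (ℕ × ℕ) := {v | v.2 = c ∧ a ≤ v.1 ∧ v.1 ≤ b}

/-- The shift `θ_m`. -/
def shiftSeq (m : ℕ) (ψ : ℕ → ℕ) : ℕ → ℕ := fun j => ψ (j + m)

/-- The hierarchical weighted word `ζ(L)`: the letter at the paper's position
`j ≥ 1` (Lean index `j - 1`) has weight `k` iff `L^k ∣ j` and `L^{k+1} ∤ j`. -/
noncomputable def zetaL (L : ℕ) : ℕ → ℕ := fun j => sSup {k | L ^ k ∣ j + 1}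

/-- Lean indices at which `ψ` has an entry `≥ k`. -/
def idxSet (ψ : ℕ → ℕ) (k : ℕ) : Set ℕ := {n | k ≤ ψ n}

/-- `i_k(ψ)`: the first (1-based, as in the paper) position at which `ψ` has
an entry `≥ k` (meaningful when `idxSet ψ k` is nonempty). -/
noncomputable def idx (ψ : ℕ → ℕ) (k : ℕ) : ℕ := sInf (idxSet ψ k) + 1

/-- Condition a) of being `M`-spaced. -/
def CondA (M : ℕ) (ψ : ℕ → ℕ) : Prop := ∀ i j : ℕ, i < j → M ^ min (ψ i) (ψ j) ≤ j - i

/-- `ψ ∈ Ψ_M^k` : `ψ` is `M`-spaced up to level `k`. -/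
def SpacedUpTo (M k : ℕ) (ψ : ℕ → ℕ) : Prop :=
  Psi ψ ∧ CondA M ψ ∧ ∀ j, 1 ≤ j → j ≤ k → (idxSet ψ j).Nonempty → M ^ j ≤ idx ψ j

/-- `ψ ∈ Ψ_M` : `ψ` is `M`-spaced. -/
def Spaced (M : ℕ) (ψ : ℕ → ℕ) : Prop :=
  Psi ψ ∧ CondA M ψ ∧ ∀ j, 1 ≤ j → (idxSet ψ j).Nonempty → M ^ j ≤ idx ψ j

/-! ### Discrete Hausdorff dimension (Barlow–Taylor) -/

/-- `ν_α(A, F)` with the normalizing diameter `dF` of `F` given explicitly; the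
infimum is over countable covers of `A ∩ F` by integer intervals `[x, y)`. -/
noncomputable def nuBT (α : ℝ) (A F : Set ℤ) (dF : ℝ) : ℝ≥0∞ :=
  (⨅ (B : ℕ → ℤ × ℤ) (_ : A ∩ F ⊆ ⋃ i, Set.Ico (B i).1 (B i).2),
      ∑' i, ENNReal.ofReal ((((B i).2 - (B i).1 : ℤ)) : ℝ) ^ α) /
    ENNReal.ofReal dF ^ α

/-- The annulus `I_n^{(r)}` (for `n ≥ 1`). -/
noncomputable def ringBT (r n : ℕ) : Set ℤ :=
  if n = 1 then Set.Ico (-(r : ℤ)) (r : ℤ)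
  else Set.Ico (-((r : ℤ) ^ n)) ((r : ℤ) ^ n) \ Set.Ico (-((r : ℤ) ^ (n - 1))) ((r : ℤ) ^ (n - 1))

/-- `m_α^{(r)}(A) = ∑_{n ≥ 1} ν_α(A, I_n^{(r)})`. -/
noncomputable def mBT (r : ℕ) (α : ℝ) (A : Set ℤ) : ℝ≥0∞ :=
  ∑' n : ℕ, nuBT α A (ringBT r (n + 1)) (2 * (r : ℝ) ^ (n + 1))

/-- The discrete (Barlow–Taylor) Hausdorff dimension of `A ⊆ ℤ`. -/
noncomputable def dimBT (r : ℕ) (A : Set ℤ) : ℝ :=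
  sInf {α : ℝ | 0 < α ∧ mBT r α A < ⊤}

/-- The set of zeroes of a binary sequence, viewed inside `ℤ` (at the paper's
positions `1, 2, …`). -/
def zeroSetZ (η : ℕ → Bool) : Set ℤ := {i : ℤ | ∃ n : ℕ, i = (n : ℤ) + 1 ∧ η n = false}

/-! ### The grouping construction -/

/-- A cluster together with its mass. -/
abbrev Clu : Type := Set ℕ × ℕ

/-- The set of (paper, i.e. 1-based) positions of the ones of `ξ`. -/
def Gamma (ξ : ℕ → Bool) : Set ℕ := {n | 1 ≤ n ∧ ξ (n - 1) = true}

/-- The span of a set: the smallest interval containing it. -/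
noncomputable def spanI (C : Set ℕ) : Set ℕ := Set.Icc (sInf C) (sSup C)

/-- Euclidean distance between two sets of integers. -/
noncomputable def cluDist (C D : Set ℕ) : ℕ := sInf {d | ∃ a ∈ C, ∃ b ∈ D, d = Nat.dist a b}

/-- Diameter of a set of integers. -/
noncomputable def sdiam (C : Set ℕ) : ℕ := sSup {d | ∃ a ∈ C, ∃ b ∈ C, d = Nat.dist a b}

/-- `C` lies entirely to the left of `D`. -/
def cluLT (C D : Set ℕ) : Prop := ∀ a ∈ C, ∀ b ∈ D, a < b

/-- `p` and `q` are adjacent clusters of the collection `B` (no cluster of `B` lies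
strictly between them) at distance `< t`. -/
def adjStep (B : Set Clu) (t : ℕ) (p q : Clu) : Prop :=
  p ∈ B ∧ q ∈ B ∧ cluDist p.1 q.1 < t ∧
    ((cluLT p.1 q.1 ∧ ∀ r ∈ B, ¬(cluLT p.1 r.1 ∧ cluLT r.1 q.1)) ∨
      (cluLT q.1 p.1 ∧ ∀ r ∈ B, ¬(cluLT q.1 r.1 ∧ cluLT r.1 p.1)))

/-- The maximal run (within the collection `B`, with gap threshold `t`) containing `p`. -/
def runOf (B : Set Clu) (t : ℕ) (p : Clu) : Set Clu :=
  {q ∈ B | Relation.ReflTransGen (adjStep B t) p q}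

/-- `R` is a maximal run of length `≥ 2` of clusters of `B` with gap threshold `t`. -/
def IsRun (B : Set Clu) (t : ℕ) (R : Set Clu) : Prop :=
  ∃ p ∈ B, R = runOf B t p ∧ ∃ q ∈ R, q ≠ p

/-- The level-`(k+1)` cluster created from a maximal `(k+1)`-run `R`: its point set is
`span(R) ∩ Γ`, and its mass is `∑ m(constituents) - k (n - 1)`. -/
noncomputable def runClu (Γ : Set ℕ) (k : ℕ) (R : Set Clu) : Clu :=
  (spanI (⋃ q ∈ R, q.1) ∩ Γ, (∑ᶠ q ∈ R, q.2) - k * (Nat.card R - 1))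

/-- One step of the grouping construction: from the partition `𝐂_k` to `𝐂_{k+1}`. -/
noncomputable def nextPart (Γ : Set ℕ) (M k : ℕ) (S : Set Clu) : Set Clu :=
  {c | ∃ R, IsRun {q ∈ S | k + 1 ≤ q.2} (M ^ (k + 1)) R ∧ c = runClu Γ k R} ∪
    {c ∈ S | ∀ R, IsRun {q ∈ S | k + 1 ≤ q.2} (M ^ (k + 1)) R →
      Disjoint c.1 (spanI (⋃ q ∈ R, q.1))}

/-- The partition `𝐂_k` of `Γ` into clusters with masses (grouping construction with
spacing parameter `M`). -/
noncomputable def parts (Γ : Set ℕ) (M : ℕ) : ℕ → Set Clu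
  | 0 => {c | ∃ x ∈ Γ, c = ({x}, 1)}
  | k + 1 => nextPart Γ M k (parts Γ M k)

/-- `c` is a cluster of level `ℓ`: it appears in `𝐂_ℓ` and in no earlier partition. -/
def IsLevelCluster (Γ : Set ℕ) (M ℓ : ℕ) (c : Clu) : Prop :=
  c ∈ parts Γ M ℓ ∧ ∀ k < ℓ, c ∉ parts Γ M k

/-- `κ(x) < ∞` : the levels of the clusters containing `x` are bounded. -/
def KappaFinite (Γ : Set ℕ) (M : ℕ) (x : ℕ) : Prop :=
  BddAbove {ℓ | ∃ c : Clu, IsLevelCluster Γ M ℓ c ∧ x ∈ c.1}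

/-- The event `Ξ(p)` on which the grouping construction is well set:
`κ(x) < ∞` for every `x ∈ Γ(ξ)`. -/
def GoodSeq (M : ℕ) (ξ : ℕ → Bool) : Prop := ∀ x ∈ Gamma ξ, KappaFinite (Gamma ξ) M x

/-- The collection `𝐂_∞` of maximal clusters: those that stay in `𝐂_k` forever. -/
def maxClusters (Γ : Set ℕ) (M : ℕ) : Set Clu :=
  {c | ∃ ℓ, ∀ k, ℓ ≤ k → c ∈ parts Γ M k}

/-- The defining condition of `χ(ξ) ≤ k` : every maximal cluster of mass `> k`
is at distance `≥ M^{mass}` from the origin.  (Positions are 1-based, so the distance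
from a cluster to `0` is its smallest element.) -/
def ChiCond (Γ : Set ℕ) (M k : ℕ) : Prop :=
  ∀ c ∈ maxClusters Γ M, k < c.2 → M ^ c.2 ≤ sInf c.1

/-- The maximal cluster containing a given point (junk if there is none). -/
noncomputable def maxCluOf (Γ : Set ℕ) (M : ℕ) (x : ℕ) : Clu :=
  letI := Classical.dec (∃ c : Clu, c ∈ maxClusters Γ M ∧ x ∈ c.1)
  if h : ∃ c : Clu, c ∈ maxClusters Γ M ∧ x ∈ c.1 then h.choose else (∅, 0)

/-- Enumeration of the maximal clusters in increasing order, together with the union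
of those already enumerated. -/
noncomputable def enumAux (Γ : Set ℕ) (M : ℕ) : ℕ → Clu × Set ℕ
  | 0 => (maxCluOf Γ M (sInf Γ), (maxCluOf Γ M (sInf Γ)).1)
  | j + 1 =>
    (maxCluOf Γ M (sInf (Γ \ (enumAux Γ M j).2)),
      (enumAux Γ M j).2 ∪ (maxCluOf Γ M (sInf (Γ \ (enumAux Γ M j).2))).1)

/-- The `j`-th maximal cluster `C_{∞,j}` (`j` is 0-based here). -/
noncomputable def enumClu (Γ : Set ℕ) (M : ℕ) (j : ℕ) : Clu := (enumAux Γ M j).1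

/-- The start-point `x̂_j` of the `j`-th maximal cluster (`j` is 0-based here). -/
noncomputable def hatx (Γ : Set ℕ) (M : ℕ) : ℕ → ℕ
  | 0 => sInf Γ
  | j + 1 => sInf (Γ \ (enumAux Γ M j).2)

/-- The (1-based) position `x̂_j - ∑_{t<j} diam(C_{∞,t})` at which the entry of the
`j`-th maximal cluster sits in the weighted word `ψ^ξ`. -/
noncomputable def cluPos (Γ : Set ℕ) (M : ℕ) (j : ℕ) : ℕ :=
  hatx Γ M j - ∑ t ∈ Finset.range j, sdiam (enumClu Γ M t).1

/-- The weighted word `ψ^ξ` associated to `ξ` by the grouping construction. -/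
noncomputable def psiXi (M : ℕ) (ξ : ℕ → Bool) : ℕ → ℕ := fun i =>
  letI := Classical.dec (∃ j : ℕ, i + 1 = cluPos (Gamma ξ) M j)
  if h : ∃ j : ℕ, i + 1 = cluPos (Gamma ξ) M j then (enumClu (Gamma ξ) M h.choose).2 else 0

/-- `ψ ⪯_M ζ`. -/
def PrecM (M : ℕ) (ψ ζ : ℕ → ℕ) : Prop :=
  ∀ j, (ψ j = 0 ↔ ζ j = 0) ∧ (1 ≤ ψ j → ψ j ≤ ζ j ∧ ζ j ≤ 3 * M ^ (ψ j - 1))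

/-- The set `∪_i (span(C_{∞,i}) \ C_{∞,i})` of points to be deleted. -/
def Dset (Γ : Set ℕ) (M : ℕ) : Set ℕ := ⋃ c ∈ maxClusters Γ M, spanI c.1 \ c.1

/-- `j_n(ξ)` : the `n`-th (0-based) element of `Dset`, shifted by `n` to account for
the previous deletions (this is the paper's `j_{n+1}`, a 1-based position). -/
noncomputable def jseq (Γ : Set ℕ) (M : ℕ) (n : ℕ) : ℕ := Nat.nth (· ∈ Dset Γ M) n - n

/-- The iterates `ξ^{(n)}` obtained by successively deleting the zeroes of `ξ`
lying inside spans of maximal clusters. -/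
noncomputable def xiIter (M : ℕ) (ξ : ℕ → Bool) : ℕ → ℕ → Bool
  | 0 => ξ
  | n + 1 => delta0 (xiIter M ξ n) (jseq (Gamma ξ) M n - 1)

/-- The fattened hierarchical weighted word `ζ̃(L)` (with `M = 3(L+1)`). -/
noncomputable def tzeta (L : ℕ) : ℕ → ℕ := fun j =>
  if zetaL L j = 0 then 0 else 3 * (3 * (L + 1)) ^ (zetaL L j - 1)

/-- `|A ∩ [0, n)|` for `A ⊆ ℕ`. -/
noncomputable def massCount (A : Set ℕ) (n : ℕ) : ℕ := Nat.card {a : ℕ | a ∈ A ∧ a < n}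

/-! ### Auxiliary: chains of points with gap exponents -/

/-- A chain of points `P` with gap exponents `E`: consecutive points increase,
with the `i`-th gap `< M ^ E i` and each exponent `≥ 1`. -/
inductive COK (M : ℕ) : List ℕ → List ℕ → Prop
  | single (x : ℕ) : COK M [x] []
  | cons {x x' : ℕ} {P E : List ℕ} (e : ℕ) (h1 : x < x') (h2 : x' - x < M ^ e)
      (h3 : 1 ≤ e) (h : COK M (x' :: P) E) : COK M (x :: x' :: P) (e :: E)

lemma COK.length_eq {M : ℕ} {P E : List ℕ} (h : COK M P E) :
    P.length = E.length + 1 := by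
  induction h with
  | single x => simp
  | cons e h1 h2 h3 h ih => simpa using ih

lemma COK.ne_nil {M : ℕ} {P E : List ℕ} (h : COK M P E) : P ≠ [] := by
  cases h <;> simp

lemma COK.append {M : ℕ} {P₁ E₁ P₂ E₂ : List ℕ} {a b e : ℕ}
    (h₁ : COK M P₁ E₁) (h₂ : COK M P₂ E₂) (ha : P₁.getLast? = some a)
    (hb : P₂.head? = some b) (hab : a < b) (hgap : b - a < M ^ e) (he : 1 ≤ e) :
    COK M (P₁ ++ P₂) (E₁ ++ e :: E₂) := by
  induction h₁ with
  | single x =>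
    simp only [List.getLast?_singleton, Option.some_inj] at ha
    obtain rfl := ha
    obtain ⟨t, rfl⟩ : ∃ t, P₂ = b :: t := by
      cases P₂ with
      | nil => simp at hb
      | cons y t =>
        simp only [List.head?_cons, Option.some_inj] at hb
        exact ⟨t, by rw [hb]⟩
    exact COK.cons e hab hgap he h₂
  | cons e' g1 g2 g3 hrest ih =>
    rename_i x x' P E
    rw [List.getLast?_cons_cons] at ha
    exact COK.cons e' g1 g2 g3 (ih ha)

/-- The list of points determined by a start point and a list of (exponent, gap) steps. -/
def ptsList (a : ℕ) (l : List (ℕ × ℕ)) : List ℕ :=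
  List.scanl (fun x s => x + s.2) a l

@[simp] lemma ptsList_nil (a : ℕ) : ptsList a [] = [a] := rfl

@[simp] lemma ptsList_cons (a : ℕ) (s : ℕ × ℕ) (l : List (ℕ × ℕ)) :
    ptsList a (s :: l) = a :: ptsList (a + s.2) l := by
  simp [ptsList, List.scanl_cons]

@[simp] lemma ptsList_length (a : ℕ) (l : List (ℕ × ℕ)) :
    (ptsList a l).length = l.length + 1 := by
  simp [ptsList, List.length_scanl]

lemma ptsList_le (a : ℕ) (l : List (ℕ × ℕ)) : ∀ x ∈ ptsList a l, a ≤ x := by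
  induction l generalizing a with
  | nil => simp
  | cons s l ih =>
    intro x hx
    rw [ptsList_cons] at hx
    rcases List.mem_cons.mp hx with rfl | h
    · exact le_rfl
    · exact le_trans (Nat.le_add_right _ _) (ih (a + s.2) x h)

lemma ptsList_chain (a : ℕ) (l : List (ℕ × ℕ)) (hl : ∀ s ∈ l, 1 ≤ s.2) :
    List.Chain' (· < ·) (ptsList a l) := by
  induction l generalizing a with
  | nil => exact List.isChain_singleton a
  | cons s l ih =>
    rw [ptsList_cons]
    refine List.IsChain.cons (ih (a + s.2) fun t ht => hl t (List.mem_cons_of_mem _ ht)) ?_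
    intro y hy
    have h1 : 1 ≤ s.2 := hl s List.mem_cons_self
    have : (ptsList (a + s.2) l).head? = some (a + s.2) := by
      cases l <;> simp
    rw [this, Option.mem_some_iff] at hy
    omega

/-- Convert a `COK` chain into a list of (exponent, gap) steps. -/
lemma COK.toSteps {M : ℕ} {P E : List ℕ} (h : COK M P E) :
    ∃ l : List (ℕ × ℕ), l.length = E.length ∧
      (∀ s ∈ l, 1 ≤ s.1 ∧ 1 ≤ s.2 ∧ s.2 < M ^ s.1) ∧
      (l.map Prod.fst).sum = E.sum ∧
      ∀ a, P.head? = some a → ptsList a l = P := by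
  induction h with
  | single x =>
    exact ⟨[], by simp, by simp, by simp, fun a ha => by
      simp only [List.head?_cons, Option.some_inj] at ha; subst ha; simp⟩
  | cons e h1 h2 h3 h ih =>
    rename_i x x' P E
    obtain ⟨l, hlen, hval, hsum, hpts⟩ := ih
    refine ⟨(e, x' - x) :: l, by simpa using hlen, ?_, ?_, ?_⟩
    · intro s hs
      rcases List.mem_cons.mp hs with rfl | hs
      · exact ⟨h3, by omega, h2⟩
      · exact hval s hs
    · simp [hsum]
    · intro a ha
      simp only [List.head?_cons, Option.some_inj] at ha
      obtain rfl := ha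
      rw [ptsList_cons]
      have hx := Nat.add_sub_cancel' (le_of_lt h1)
      simp only [hx]
      rw [hpts x' (by simp)]
/-! ### Invariants of the grouping construction -/

/-- The chain property of a cluster. -/
def CProp (Γ : Set ℕ) (M : ℕ) (c : Clu) : Prop :=
  ∃ P E : List ℕ, COK M P E ∧ P.head? = some (sInf c.1) ∧ P.getLast? = some (sSup c.1) ∧
    (∀ x ∈ P, x ∈ Γ) ∧ c.2 ≤ P.length ∧ E.sum + c.2 + 1 ≤ 2 * P.length

/-- The basic invariant of a cluster. -/
def Inv1 (Γ : Set ℕ) (M : ℕ) (c : Clu) : Prop :=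
  c.1 ⊆ Γ ∧ c.1.Finite ∧ spanI c.1 ∩ Γ ⊆ c.1 ∧
    (1 ≤ c.2 → c.1.Nonempty ∧ CProp Γ M c)

/-- Distinct clusters of positive mass are comparable. -/
def OrdOn (S : Set Clu) : Prop :=
  ∀ c ∈ S, ∀ d ∈ S, 1 ≤ c.2 → 1 ≤ d.2 → c ≠ d → cluLT c.1 d.1 ∨ cluLT d.1 c.1

section Bfacts

variable {Γ : Set ℕ} {M : ℕ} {B : Set Clu} {t : ℕ}

/-- Hypotheses on the collection `B` of clusters being grouped. -/
structure BH (Γ : Set ℕ) (M : ℕ) (B : Set Clu) : Prop where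
  ne : ∀ q ∈ B, q.1.Nonempty
  fin : ∀ q ∈ B, q.1.Finite
  sub : ∀ q ∈ B, q.1 ⊆ Γ
  cmp : ∀ q ∈ B, ∀ q' ∈ B, q ≠ q' → cluLT q.1 q'.1 ∨ cluLT q'.1 q.1
  chain : ∀ q ∈ B, CProp Γ M q

lemma BH.lt_iff (hB : BH Γ M B) {q q' : Clu} (hq : q ∈ B) (hq' : q' ∈ B) (hne : q ≠ q') :
    cluLT q.1 q'.1 ↔ sInf q.1 < sInf q'.1 := by
  constructor
  · intro h
    exact h _ (Nat.sInf_mem (hB.ne q hq)) _ (Nat.sInf_mem (hB.ne q' hq'))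
  · intro h
    rcases hB.cmp q hq q' hq' hne with h' | h'
    · exact h'
    · exact absurd (h' _ (Nat.sInf_mem (hB.ne q' hq')) _ (Nat.sInf_mem (hB.ne q hq)))
        (by omega)

lemma BH.key_inj (hB : BH Γ M B) {q q' : Clu} (hq : q ∈ B) (hq' : q' ∈ B)
    (h : sInf q.1 = sInf q'.1) : q = q' := by
  by_contra hne
  rcases hB.cmp q hq q' hq' hne with h' | h'
  · exact absurd ((hB.lt_iff hq hq' hne).mp h') (by omega)
  · exact absurd ((hB.lt_iff hq' hq (Ne.symm hne)).mp h') (by omega)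

lemma BH.sSup_lt_sInf (hB : BH Γ M B) {q q' : Clu} (hq : q ∈ B) (hq' : q' ∈ B)
    (h : cluLT q.1 q'.1) : sSup q.1 < sInf q'.1 :=
  h _ (Nat.sSup_mem (hB.ne q hq) ((hB.fin q hq).bddAbove)) _ (Nat.sInf_mem (hB.ne q' hq'))

lemma cluDist_witness {C D : Set ℕ} {t : ℕ} (hC : C.Nonempty) (hD : D.Nonempty)
    (h : cluDist C D < t) : ∃ a ∈ C, ∃ b ∈ D, Nat.dist a b < t := by
  obtain ⟨a, ha⟩ := hC
  obtain ⟨b, hb⟩ := hD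
  have hne : {d | ∃ a ∈ C, ∃ b ∈ D, d = Nat.dist a b}.Nonempty :=
    ⟨Nat.dist a b, a, ha, b, hb, rfl⟩
  have := Nat.sInf_mem hne
  obtain ⟨a', ha', b', hb', hd⟩ := this
  exact ⟨a', ha', b', hb', by rw [← hd]; exact h⟩

lemma adjStep_symm {p q : Clu} (h : adjStep B t p q) : adjStep B t q p :=
  ⟨h.2.1, h.1, by
    have : {d | ∃ a ∈ q.1, ∃ b ∈ p.1, d = Nat.dist a b} =
        {d | ∃ a ∈ p.1, ∃ b ∈ q.1, d = Nat.dist a b} := by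
      ext d
      constructor
      · rintro ⟨a, ha, b, hb, rfl⟩; exact ⟨b, hb, a, ha, Nat.dist_comm a b⟩
      · rintro ⟨a, ha, b, hb, rfl⟩; exact ⟨b, hb, a, ha, Nat.dist_comm a b⟩
    rw [cluDist, this]; exact h.2.2.1, h.2.2.2.symm⟩

lemma rtg_mem_B {x y : Clu} (hx : x ∈ B) (h : Relation.ReflTransGen (adjStep B t) x y) :
    y ∈ B := by
  induction h with
  | refl => exact hx
  | tail _ hstep ih => exact hstep.2.1

lemma runOf_subset : runOf B t p ⊆ B := fun q hq => hq.1

lemma runOf_conn {p x y : Clu} (hx : x ∈ runOf B t p) (hy : y ∈ runOf B t p) :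
    Relation.ReflTransGen (adjStep B t) x y := by
  have hsymm : Symmetric (adjStep B t) := fun a b h => adjStep_symm h
  exact Relation.ReflTransGen.trans
    ((@Std.Symm.symm _ _ (@Relation.ReflTransGen.symmetric _ _ ⟨fun a b h => hsymm h⟩) _ _) hx.2) hy.2

end Bfacts
section PathFacts

variable {Γ : Set ℕ} {M : ℕ} {B : Set Clu} {t : ℕ}

lemma BH.pathCross (hB : BH Γ M B) {u v : Clu}
    (h : Relation.ReflTransGen (adjStep B t) u v) (hu : u ∈ B) :
    ∀ b ∈ B, sInf u.1 ≤ sInf b.1 → sInf b.1 ≤ sInf v.1 →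
      Relation.ReflTransGen (adjStep B t) u b := by
  induction h with
  | refl =>
    intro b hb h1 h2
    have : b = u := hB.key_inj hb hu (by omega)
    subst this
    exact Relation.ReflTransGen.refl
  | @tail w v hpath hstep ih =>
    intro b hb h1 h2
    by_cases hbw : sInf b.1 ≤ sInf w.1
    · exact ih b hb h1 hbw
    · push_neg at hbw
      have hwB : w ∈ B := hstep.1
      have hvB : v ∈ B := hstep.2.1
      by_cases hbv : b = v
      · subst hbv
        exact hpath.tail hstep
      · have hbv' : sInf b.1 < sInf v.1 := by
          rcases lt_or_eq_of_le h2 with h | h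
          · exact h
          · exact absurd (hB.key_inj hb hvB h) hbv
        rcases hstep.2.2.2 with ⟨hlt, hnb⟩ | ⟨hlt, hnb⟩
        · exact absurd ⟨(hB.lt_iff hwB hb (fun h => by subst h; omega)).mpr hbw,
            (hB.lt_iff hb hvB hbv).mpr hbv'⟩ (hnb b hb)
        · have := (hB.lt_iff hvB hwB (fun h => by subst h; omega)).mp hlt
          omega

lemma BH.edgeExists (hB : BH Γ M B) {u v : Clu}
    (h : Relation.ReflTransGen (adjStep B t) u v) :
    ∀ x ∈ B, ∀ y ∈ B, sInf x.1 < sInf y.1 →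
      (∀ b ∈ B, ¬(sInf x.1 < sInf b.1 ∧ sInf b.1 < sInf y.1)) →
      sInf u.1 ≤ sInf x.1 → sInf y.1 ≤ sInf v.1 → adjStep B t x y := by
  induction h with
  | refl =>
    intro x hx y hy hxy hnb h1 h2
    omega
  | @tail w v hpath hstep ih =>
    intro x hx y hy hxy hnb h1 h2
    have hwB : w ∈ B := hstep.1
    have hvB : v ∈ B := hstep.2.1
    by_cases hyw : sInf y.1 ≤ sInf w.1
    · exact ih x hx y hy hxy hnb h1 hyw
    · push_neg at hyw
      have hwx : sInf w.1 ≤ sInf x.1 := by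
        by_contra hc
        push_neg at hc
        exact hnb w hwB ⟨hc, hyw⟩
      have hwv : cluLT w.1 v.1 := by
        rcases hstep.2.2.2 with ⟨hlt, _⟩ | ⟨hlt, _⟩
        · exact hlt
        · have hne : v ≠ w := fun h => by subst h; omega
          have := (hB.lt_iff hvB hwB hne).mp hlt
          omega
      obtain ⟨-, hnb'⟩ : cluLT w.1 v.1 ∧ ∀ r ∈ B, ¬(cluLT w.1 r.1 ∧ cluLT r.1 v.1) := by
        rcases hstep.2.2.2 with ⟨hlt, hnb'⟩ | ⟨hlt, _⟩
        · exact ⟨hlt, hnb'⟩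
        · have hne : v ≠ w := fun h => by subst h; omega
          have := (hB.lt_iff hvB hwB hne).mp hlt
          omega
      have hkwv : sInf w.1 < sInf v.1 :=
        (hB.lt_iff hwB hvB (fun h => by rw [h] at hyw; omega)).mp hwv
      have hxw : x = w := by
        by_contra hc
        have hwx' : sInf w.1 < sInf x.1 := by
          rcases lt_or_eq_of_le hwx with h | h
          · exact h
          · exact absurd (hB.key_inj hwB hx h).symm hc
        refine hnb' x hx ⟨(hB.lt_iff hwB hx (Ne.symm hc)).mpr hwx', ?_⟩
        refine (hB.lt_iff hx hvB (fun h => by subst h; omega)).mpr ?_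
        omega
      have hyv : y = v := by
        by_contra hc
        have hyv' : sInf y.1 < sInf v.1 := by
          rcases lt_or_eq_of_le h2 with h | h
          · exact h
          · exact absurd (hB.key_inj hy hvB h) hc
        refine hnb' y hy ⟨?_, (hB.lt_iff hy hvB hc).mpr hyv'⟩
        refine (hB.lt_iff hwB hy (fun h => by subst h; omega)).mpr ?_
        omega
      subst hxw; subst hyv
      exact hstep

lemma BH.inBetween (hB : BH Γ M B) {p x y b : Clu}
    (hx : x ∈ runOf B t p) (hy : y ∈ runOf B t p) (hb : b ∈ B)
    (h1 : sInf x.1 < sInf b.1) (h2 : sInf b.1 < sInf y.1) : b ∈ runOf B t p := by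
  have hconn := runOf_conn hx hy
  have hxB : x ∈ B := hx.1
  have := hB.pathCross hconn hxB b hb (le_of_lt h1) (le_of_lt h2)
  exact ⟨hb, hx.2.trans this⟩

lemma BH.edgeAdj (hB : BH Γ M B) {p x y : Clu}
    (hx : x ∈ runOf B t p) (hy : y ∈ runOf B t p) (hxy : sInf x.1 < sInf y.1)
    (hnb : ∀ b ∈ B, ¬(sInf x.1 < sInf b.1 ∧ sInf b.1 < sInf y.1)) :
    cluDist x.1 y.1 < t := by
  have hconn := runOf_conn hx hy
  exact (hB.edgeExists hconn x hx.1 y hy.1 hxy hnb le_rfl le_rfl).2.2.1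

end PathFacts
section RunFacts

variable {Γ : Set ℕ} {M : ℕ} {B : Set Clu} {t : ℕ}

lemma run_finite_of_mass {ℓ : ℕ} {R : Set Clu}
    (hmass : ∀ q ∈ B, 1 ≤ q.2) (hRB : R ⊆ B) (hm : 1 ≤ (runClu Γ ℓ R).2) :
    R.Finite := by
  by_contra hinf
  have hsup : R ∩ Function.support (fun q : Clu => q.2) = R := by
    ext q
    refine ⟨fun h => h.1, fun h => ⟨h, ?_⟩⟩
    have := hmass q (hRB h)
    simp only [Function.mem_support]
    omega
  have h0 : (∑ᶠ q ∈ R, q.2) = 0 := by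
    apply finsum_mem_eq_zero_of_infinite
    rw [hsup]
    exact hinf
  simp only [runClu, h0] at hm
  omega

lemma runEndpoints (hB : BH Γ M B) {R : Set Clu} (ℓ : ℕ) (hRB : R ⊆ B)
    (hfin : R.Finite) {qmin qmax : Clu} (hqmin : qmin ∈ R) (hqmax : qmax ∈ R)
    (hmin : ∀ a ∈ R, sInf qmin.1 ≤ sInf a.1) (hmax : ∀ a ∈ R, sInf a.1 ≤ sInf qmax.1) :
    spanI (⋃ q ∈ R, q.1) = Set.Icc (sInf qmin.1) (sSup qmax.1) ∧
    (runClu Γ ℓ R).1 = Set.Icc (sInf qmin.1) (sSup qmax.1) ∩ Γ ∧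
    sInf (runClu Γ ℓ R).1 = sInf qmin.1 ∧ sSup (runClu Γ ℓ R).1 = sSup qmax.1 ∧
    (runClu Γ ℓ R).1.Nonempty ∧
    (runClu Γ ℓ R).1 ⊆ Set.Icc (sInf qmin.1) (sSup qmax.1) := by
  set U := ⋃ q ∈ R, q.1 with hU
  have hQmin := hB.ne qmin (hRB hqmin)
  have hQmax := hB.ne qmax (hRB hqmax)
  have hU1 : sInf qmin.1 ∈ U := Set.mem_biUnion hqmin (Nat.sInf_mem hQmin)
  have hU2 : ∀ x ∈ U, sInf qmin.1 ≤ x ∧ x ≤ sSup qmax.1 := by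
    intro x hx
    obtain ⟨q, hq, hxq⟩ := Set.mem_iUnion₂.mp hx
    constructor
    · exact le_trans (hmin q hq) (Nat.sInf_le hxq)
    · have hx1 : x ≤ sSup q.1 := le_csSup ((hB.fin q (hRB hq)).bddAbove) hxq
      by_cases hqq : q = qmax
      · subst hqq; exact hx1
      · have hlt : cluLT q.1 qmax.1 := by
          refine (hB.lt_iff (hRB hq) (hRB hqmax) hqq).mpr ?_
          rcases lt_or_eq_of_le (hmax q hq) with h | h
          · exact h
          · exact absurd (hB.key_inj (hRB hq) (hRB hqmax) h) hqq
        have h2 := hB.sSup_lt_sInf (hRB hq) (hRB hqmax) hlt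
        have h3 : sInf qmax.1 ≤ sSup qmax.1 :=
          le_csSup ((hB.fin qmax (hRB hqmax)).bddAbove) (Nat.sInf_mem hQmax)
        omega
  have hinfU : sInf U = sInf qmin.1 := by
    refine le_antisymm (Nat.sInf_le hU1) (le_csInf ⟨_, hU1⟩ fun x hx => (hU2 x hx).1)
  have hbddU : BddAbove U := ⟨sSup qmax.1, fun x hx => (hU2 x hx).2⟩
  have hsupmem : sSup qmax.1 ∈ U :=
    Set.mem_biUnion hqmax (Nat.sSup_mem hQmax ((hB.fin qmax (hRB hqmax)).bddAbove))
  have hsupU : sSup U = sSup qmax.1 := by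
    refine le_antisymm (csSup_le ⟨_, hU1⟩ fun x hx => (hU2 x hx).2)
      (le_csSup hbddU hsupmem)
  have hspan : spanI U = Set.Icc (sInf qmin.1) (sSup qmax.1) := by
    rw [spanI, hinfU, hsupU]
  have hc1 : (runClu Γ ℓ R).1 = Set.Icc (sInf qmin.1) (sSup qmax.1) ∩ Γ := by
    simp only [runClu, ← hU, hspan]
  have hlo_le_hi : sInf qmin.1 ≤ sSup qmax.1 := (hU2 _ hU1).2
  have hmem1 : sInf qmin.1 ∈ (runClu Γ ℓ R).1 := by
    rw [hc1]
    exact ⟨⟨le_rfl, hlo_le_hi⟩, hB.sub qmin (hRB hqmin) (Nat.sInf_mem hQmin)⟩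
  have hmem2 : sSup qmax.1 ∈ (runClu Γ ℓ R).1 := by
    rw [hc1]
    exact ⟨⟨hlo_le_hi, le_rfl⟩, hB.sub qmax (hRB hqmax)
      (Nat.sSup_mem hQmax ((hB.fin qmax (hRB hqmax)).bddAbove))⟩
  have hsubIcc : (runClu Γ ℓ R).1 ⊆ Set.Icc (sInf qmin.1) (sSup qmax.1) := by
    rw [hc1]; exact Set.inter_subset_left
  refine ⟨hspan, hc1, ?_, ?_, ⟨_, hmem1⟩, hsubIcc⟩
  · refine le_antisymm (Nat.sInf_le hmem1) (le_csInf ⟨_, hmem1⟩ fun x hx => (hsubIcc hx).1)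
  · refine le_antisymm (csSup_le ⟨_, hmem2⟩ fun x hx => (hsubIcc hx).2)
      (le_csSup ⟨sSup qmax.1, fun x hx => (hsubIcc hx).2⟩ hmem2)

end RunFacts
section Peel

variable {Γ : Set ℕ} {M : ℕ} {B : Set Clu} {t : ℕ}

lemma peel (hB : BH Γ M B) {p : Clu} (ℓ : ℕ) (ht : t = M ^ (ℓ + 1)) :
    ∀ n (G : Finset Clu), G.card = n → (↑G : Set Clu) ⊆ runOf B t p → G.Nonempty →
    (∀ a ∈ runOf B t p, ∀ g ∈ G, sInf a.1 ≤ sInf g.1 → a ∈ G) →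
    ∃ qmin ∈ G, ∃ qmax ∈ G,
      (∀ a ∈ G, sInf qmin.1 ≤ sInf a.1 ∧ sInf a.1 ≤ sInf qmax.1) ∧
      ∃ P E : List ℕ, COK M P E ∧ P.head? = some (sInf qmin.1) ∧
        P.getLast? = some (sSup qmax.1) ∧ (∀ x ∈ P, x ∈ Γ) ∧
        (∑ q ∈ G, q.2) ≤ P.length + ℓ * (n - 1) ∧
        E.sum + (∑ q ∈ G, q.2) + 1 ≤ 2 * P.length + ℓ * (n - 1) := by
  intro n
  induction n with
  | zero =>
    intro G hcard hsub hne hdc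
    rw [Finset.card_eq_zero] at hcard
    subst hcard
    exact absurd hne (by simp)
  | succ n ih =>
    intro G hcard hsub hne hdc
    classical
    obtain ⟨qmax, hqmaxG, hqmaxmax⟩ := G.exists_max_image (fun q => sInf q.1) hne
    have hGB : ∀ g ∈ G, g ∈ B := fun g hg => (hsub hg).1
    by_cases hn : n = 0
    · subst hn
      obtain ⟨a, rfl⟩ := Finset.card_eq_one.mp hcard
      have haq : qmax = a := Finset.mem_singleton.mp hqmaxG
      subst haq
      obtain ⟨P, E, hcok, hhead, hlast, hmem, hm1, hm2⟩ :=
        hB.chain qmax (hGB qmax hqmaxG)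
      refine ⟨qmax, hqmaxG, qmax, hqmaxG, ?_, P, E, hcok, hhead, hlast, hmem, ?_, ?_⟩
      · intro a ha
        rw [Finset.mem_singleton.mp ha]
        exact ⟨le_rfl, le_rfl⟩
      · simpa using hm1
      · simpa using hm2
    · set G' := G.erase qmax with hG'
      have hcard' : G'.card = n := by
        rw [hG', Finset.card_erase_of_mem hqmaxG, hcard]
        omega
      have hsub' : (↑G' : Set Clu) ⊆ runOf B t p :=
        fun x hx => hsub (Finset.mem_coe.mpr (Finset.mem_of_mem_erase (Finset.mem_coe.mp hx)))
      have hne' : G'.Nonempty := Finset.card_pos.mp (by omega)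
      have hdc' : ∀ a ∈ runOf B t p, ∀ g ∈ G', sInf a.1 ≤ sInf g.1 → a ∈ G' := by
        intro a haR g hgG' hag
        have hgG : g ∈ G := Finset.mem_of_mem_erase hgG'
        have haG : a ∈ G := hdc a haR g hgG hag
        refine Finset.mem_erase.mpr ⟨?_, haG⟩
        rintro rfl
        have h1 : sInf g.1 ≤ sInf a.1 := hqmaxmax g hgG
        have : a = g := hB.key_inj (hGB a haG) (hGB g hgG) (by omega)
        exact (Finset.ne_of_mem_erase hgG') this.symm
      obtain ⟨qmin, hqminG', qmax', hqmax'G', hmm', P, E, hcok, hhead, hlast, hmem,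
        hs1, hs2⟩ := ih G' hcard' hsub' hne' hdc'
      have hqmax'R : qmax' ∈ runOf B t p := hsub' (Finset.mem_coe.mpr hqmax'G')
      have hqmaxR : qmax ∈ runOf B t p := hsub (Finset.mem_coe.mpr hqmaxG)
      have hq'B : qmax' ∈ B := hqmax'R.1
      have hqB : qmax ∈ B := hqmaxR.1
      have hne'' : qmax' ≠ qmax := Finset.ne_of_mem_erase hqmax'G'
      have hklt : sInf qmax'.1 < sInf qmax.1 := by
        rcases lt_or_eq_of_le (hqmaxmax qmax' (Finset.mem_of_mem_erase hqmax'G')) with h | h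
        · exact h
        · exact absurd (hB.key_inj hq'B hqB h) hne''
      have hnb : ∀ b ∈ B, ¬(sInf qmax'.1 < sInf b.1 ∧ sInf b.1 < sInf qmax.1) := by
        rintro b hbB ⟨hb1, hb2⟩
        have hbR : b ∈ runOf B t p := hB.inBetween hqmax'R hqmaxR hbB hb1 hb2
        have hbG : b ∈ G := hdc b hbR qmax hqmaxG (le_of_lt hb2)
        have hbG' : b ∈ G' := Finset.mem_erase.mpr ⟨fun h => by subst h; omega, hbG⟩
        have := (hmm' b hbG').2
        omega
      have hdist := hB.edgeAdj hqmax'R hqmaxR hklt hnb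
      obtain ⟨a₀, ha₀, b₀, hb₀, hd⟩ :=
        cluDist_witness (hB.ne _ hq'B) (hB.ne _ hqB) hdist
      have hltq : cluLT qmax'.1 qmax.1 := (hB.lt_iff hq'B hqB hne'').mpr hklt
      have hab : a₀ < b₀ := hltq _ ha₀ _ hb₀
      rw [Nat.dist_eq_sub_of_le (le_of_lt hab)] at hd
      have hsupinf : sSup qmax'.1 < sInf qmax.1 := hB.sSup_lt_sInf hq'B hqB hltq
      have hgap : sInf qmax.1 - sSup qmax'.1 < M ^ (ℓ + 1) := by
        have h1 : sInf qmax.1 ≤ b₀ := Nat.sInf_le hb₀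
        have h2 : a₀ ≤ sSup qmax'.1 := le_csSup (hB.fin _ hq'B).bddAbove ha₀
        rw [ht] at hd
        omega
      obtain ⟨P₂, E₂, hcok₂, hhead₂, hlast₂, hmem₂, hm1₂, hm2₂⟩ := hB.chain qmax hqB
      have hcok' := COK.append hcok hcok₂ hlast hhead₂ hsupinf hgap (by omega)
      refine ⟨qmin, Finset.mem_of_mem_erase hqminG', qmax, hqmaxG, ?_,
        P ++ P₂, E ++ (ℓ + 1) :: E₂, hcok', ?_, ?_, ?_, ?_, ?_⟩
      · intro a haG
        by_cases haq : a = qmax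
        · subst haq
          exact ⟨le_trans (hmm' qmin hqminG').2 (le_of_lt hklt), le_rfl⟩
        · have haG' : a ∈ G' := Finset.mem_erase.mpr ⟨haq, haG⟩
          exact ⟨(hmm' a haG').1, le_trans (hmm' a haG').2 (le_of_lt hklt)⟩
      · rw [List.head?_append, hhead]; rfl
      · rw [List.getLast?_append, hlast₂]; rfl
      · intro x hx
        rcases List.mem_append.mp hx with h | h
        · exact hmem x h
        · exact hmem₂ x h
      · have hseq : (∑ q ∈ G', q.2) + qmax.2 = ∑ q ∈ G, q.2 :=
          Finset.sum_erase_add G _ hqmaxG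
        have hmul : ℓ * n = ℓ * (n - 1) + ℓ := by
          have h1 : n - 1 + 1 = n := by omega
          calc ℓ * n = ℓ * (n - 1 + 1) := by rw [h1]
          _ = ℓ * (n - 1) + ℓ := by ring
        simp only [List.length_append, Nat.add_sub_cancel]
        rw [hmul]
        generalize ℓ * (n - 1) = D at hs1 ⊢
        omega
      · have hseq : (∑ q ∈ G', q.2) + qmax.2 = ∑ q ∈ G, q.2 :=
          Finset.sum_erase_add G _ hqmaxG
        have hmul : ℓ * n = ℓ * (n - 1) + ℓ := by
          have h1 : n - 1 + 1 = n := by omega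
          calc ℓ * n = ℓ * (n - 1 + 1) := by rw [h1]
          _ = ℓ * (n - 1) + ℓ := by ring
        simp only [List.length_append, List.sum_append, List.sum_cons, Nat.add_sub_cancel]
        rw [hmul]
        generalize ℓ * (n - 1) = D at hs2 ⊢
        omega

end Peel
section StepSec

variable {Γ : Set ℕ} {M : ℕ} {B : Set Clu} {t : ℕ}

lemma icc_inter_iv (hΓ : 0 ∉ Γ) (a b : ℕ) :
    spanI (Set.Icc a b ∩ Γ) ∩ Γ ⊆ Set.Icc a b ∩ Γ := by
  intro x hx
  obtain ⟨hx1, hx2⟩ := hx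
  set A := Set.Icc a b ∩ Γ with hA
  by_cases hne : A.Nonempty
  · have hfin : A.Finite := (Set.finite_Icc a b).subset Set.inter_subset_left
    have h1 : sInf A ∈ A := Nat.sInf_mem hne
    have h2 : sSup A ∈ A := Nat.sSup_mem hne hfin.bddAbove
    rw [spanI] at hx1
    refine ⟨⟨le_trans h1.1.1 hx1.1, le_trans hx1.2 h2.1.2⟩, hx2⟩
  · rw [Set.not_nonempty_iff_eq_empty] at hne
    rw [spanI, hne] at hx1
    simp only [Nat.sInf_empty, csSup_empty, Nat.bot_eq_zero] at hx1
    have : x = 0 := by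
      simp only [Set.mem_Icc] at hx1
      omega
    exact absurd (this ▸ hx2) hΓ

lemma runOf_eq_of_mem {p p' q : Clu} (hq : q ∈ runOf B t p) (hq' : q ∈ runOf B t p') :
    runOf B t p = runOf B t p' := by
  have hsymm : Symmetric (adjStep B t) := fun a b h => adjStep_symm h
  ext r
  constructor
  · intro hr
    exact ⟨hr.1, (hq'.2.trans ((@Std.Symm.symm _ _ (@Relation.ReflTransGen.symmetric _ _ ⟨fun a b h => hsymm h⟩) _ _) hq.2)).trans hr.2⟩
  · intro hr
    exact ⟨hr.1, (hq.2.trans ((@Std.Symm.symm _ _ (@Relation.ReflTransGen.symmetric _ _ ⟨fun a b h => hsymm h⟩) _ _) hq'.2)).trans hr.2⟩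

lemma runData (hB : BH Γ M B) (hmass : ∀ q ∈ B, 1 ≤ q.2) {R : Set Clu} (ℓ : ℕ)
    (hR : IsRun B t R) (hm : 1 ≤ (runClu Γ ℓ R).2) :
    ∃ qmin qmax : Clu, qmin ∈ R ∧ qmax ∈ R ∧ R.Finite ∧ R ⊆ B ∧
      (∀ a ∈ R, sInf qmin.1 ≤ sInf a.1 ∧ sInf a.1 ≤ sInf qmax.1) ∧
      spanI (⋃ q ∈ R, q.1) = Set.Icc (sInf qmin.1) (sSup qmax.1) ∧
      (runClu Γ ℓ R).1 = Set.Icc (sInf qmin.1) (sSup qmax.1) ∩ Γ ∧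
      sInf (runClu Γ ℓ R).1 = sInf qmin.1 ∧ sSup (runClu Γ ℓ R).1 = sSup qmax.1 ∧
      (runClu Γ ℓ R).1.Nonempty ∧
      (runClu Γ ℓ R).1 ⊆ Set.Icc (sInf qmin.1) (sSup qmax.1) := by
  obtain ⟨p, hpB, hReq, -⟩ := hR
  have hRsub : R ⊆ B := by rw [hReq]; exact runOf_subset
  have hfin : R.Finite := run_finite_of_mass hmass hRsub hm
  have hpR : p ∈ R := by rw [hReq]; exact ⟨hpB, Relation.ReflTransGen.refl⟩
  have hFne : hfin.toFinset.Nonempty := ⟨p, hfin.mem_toFinset.mpr hpR⟩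
  obtain ⟨qmin, hqminF, hqminmin⟩ :=
    hfin.toFinset.exists_min_image (fun q => sInf q.1) hFne
  obtain ⟨qmax, hqmaxF, hqmaxmax⟩ :=
    hfin.toFinset.exists_max_image (fun q => sInf q.1) hFne
  have hqminR : qmin ∈ R := hfin.mem_toFinset.mp hqminF
  have hqmaxR : qmax ∈ R := hfin.mem_toFinset.mp hqmaxF
  have hminR : ∀ a ∈ R, sInf qmin.1 ≤ sInf a.1 :=
    fun a ha => hqminmin a (hfin.mem_toFinset.mpr ha)
  have hmaxR : ∀ a ∈ R, sInf a.1 ≤ sInf qmax.1 :=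
    fun a ha => hqmaxmax a (hfin.mem_toFinset.mpr ha)
  obtain ⟨hspan, hc1, hsinf, hssup, hne, hsub⟩ :=
    runEndpoints hB ℓ hRsub hfin hqminR hqmaxR hminR hmaxR
  exact ⟨qmin, qmax, hqminR, hqmaxR, hfin, hRsub,
    fun a ha => ⟨hminR a ha, hmaxR a ha⟩, hspan, hc1, hsinf, hssup, hne, hsub⟩

end StepSec
section MainInd

variable {Γ : Set ℕ} {M : ℕ}

lemma step_inv (hΓ : 0 ∉ Γ) (ℓ : ℕ) {S : Set Clu}
    (h1 : ∀ c ∈ S, Inv1 Γ M c) (h2 : OrdOn S) :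
    (∀ c ∈ nextPart Γ M ℓ S, Inv1 Γ M c) ∧ OrdOn (nextPart Γ M ℓ S) := by
  classical
  set B : Set Clu := {q ∈ S | ℓ + 1 ≤ q.2} with hBdef
  set t : ℕ := M ^ (ℓ + 1) with htdef
  have hmass : ∀ q ∈ B, 1 ≤ q.2 := fun q hq => le_trans (by omega) hq.2
  have hB : BH Γ M B :=
    ⟨fun q hq => ((h1 q hq.1).2.2.2 (hmass q hq)).1,
     fun q hq => (h1 q hq.1).2.1,
     fun q hq => (h1 q hq.1).1,
     fun q hq q' hq' hne => h2 q hq.1 q' hq'.1 (hmass q hq) (hmass q' hq') hne,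
     fun q hq => ((h1 q hq.1).2.2.2 (hmass q hq)).2⟩
  have hnewInv : ∀ R : Set Clu, IsRun B t R → Inv1 Γ M (runClu Γ ℓ R) := by
    intro R hR
    have hc1' : (runClu Γ ℓ R).1 =
        Set.Icc (sInf (⋃ q ∈ R, q.1)) (sSup (⋃ q ∈ R, q.1)) ∩ Γ := rfl
    refine ⟨by rw [hc1']; exact Set.inter_subset_right,
      by rw [hc1']; exact (Set.finite_Icc _ _).subset Set.inter_subset_left,
      by rw [hc1']; exact icc_inter_iv hΓ _ _, ?_⟩
    intro hm
    obtain ⟨qmin, qmax, hqminR, hqmaxR, hfin, hRsub, hmm, hspan, hc1, hsinf, hssup,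
      hne, hsubI⟩ := runData hB hmass ℓ hR hm
    refine ⟨hne, ?_⟩
    obtain ⟨p, hpB, hReq, -⟩ := hR
    have hFsub : (↑hfin.toFinset : Set Clu) ⊆ runOf B t p := by
      rw [hfin.coe_toFinset, ← hReq]
    have hFne : hfin.toFinset.Nonempty := ⟨qmin, hfin.mem_toFinset.mpr hqminR⟩
    have hdc : ∀ a ∈ runOf B t p, ∀ g ∈ hfin.toFinset,
        sInf a.1 ≤ sInf g.1 → a ∈ hfin.toFinset := by
      intro a haR g hg hag
      exact hfin.mem_toFinset.mpr (hReq ▸ haR)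
    obtain ⟨qmin', hqmin'F, qmax', hqmax'F, hmm', P, E, hcok, hhead, hlast, hmemΓ,
      hs1, hs2⟩ := peel hB ℓ htdef hfin.toFinset.card hfin.toFinset rfl hFsub hFne hdc
    have hqmin'R : qmin' ∈ R := hfin.mem_toFinset.mp hqmin'F
    have hqmax'R : qmax' ∈ R := hfin.mem_toFinset.mp hqmax'F
    have he1 : qmin' = qmin :=
      hB.key_inj (hRsub hqmin'R) (hRsub hqminR)
        (le_antisymm ((hmm' qmin (hfin.mem_toFinset.mpr hqminR)).1)
          ((hmm qmin' hqmin'R).1))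
    have he2 : qmax' = qmax :=
      hB.key_inj (hRsub hqmax'R) (hRsub hqmaxR)
        (le_antisymm ((hmm qmax' hqmax'R).2)
          ((hmm' qmax (hfin.mem_toFinset.mpr hqmaxR)).2))
    rw [he1] at hhead
    rw [he2] at hlast
    have hWs : (∑ᶠ q ∈ R, q.2) = ∑ q ∈ hfin.toFinset, q.2 := by
      have h := finsum_mem_coe_finset (fun q : Clu => q.2) hfin.toFinset
      rw [hfin.coe_toFinset] at h
      exact h
    have hNcard : Nat.card ↥R = hfin.toFinset.card := by
      rw [Nat.card_coe_set_eq, Set.ncard_eq_toFinset_card R hfin]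
    have hm2 : (runClu Γ ℓ R).2 =
        (∑ q ∈ hfin.toFinset, q.2) - ℓ * (hfin.toFinset.card - 1) := by
      simp only [runClu, hWs, hNcard]
    have hkey : ∀ X, X = (∑ q ∈ hfin.toFinset, q.2) - ℓ * (hfin.toFinset.card - 1) →
        X ≤ P.length ∧ E.sum + X + 1 ≤ 2 * P.length := by
      intro X hX
      generalize hD : ℓ * (hfin.toFinset.card - 1) = D at hX hs1 hs2
      generalize hW : (∑ q ∈ hfin.toFinset, q.2) = W at hX hs1 hs2
      exact ⟨by omega, by omega⟩
    obtain ⟨hA, hA'⟩ := hkey _ hm2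
    exact ⟨P, E, hcok, by rw [hsinf]; exact hhead, by rw [hssup]; exact hlast,
      hmemΓ, hA, hA'⟩
  have hkn : ∀ c ∈ S, (∀ R, IsRun B t R → Disjoint c.1 (spanI (⋃ q ∈ R, q.1))) →
      1 ≤ c.2 → ∀ R, IsRun B t R → 1 ≤ (runClu Γ ℓ R).2 →
      cluLT c.1 (runClu Γ ℓ R).1 ∨ cluLT (runClu Γ ℓ R).1 c.1 := by
    intro c hcS hdisj hc2 R hR hm
    obtain ⟨qmin, qmax, hqminR, hqmaxR, hfin, hRsub, hmm, hspan, hc1, hsinf, hssup,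
      hne, hsubI⟩ := runData hB hmass ℓ hR hm
    have hI := h1 c hcS
    obtain ⟨hcne, -⟩ := hI.2.2.2 hc2
    have hd := hdisj R hR
    rw [hspan] at hd
    have hbddc : BddAbove c.1 := hI.2.1.bddAbove
    have hb₀ : sSup c.1 ∈ c.1 := Nat.sSup_mem hcne hbddc
    have ha₀ : sInf c.1 ∈ c.1 := Nat.sInf_mem hcne
    by_cases h1' : sSup c.1 < sInf qmin.1
    · left
      intro x hx y hy
      have hy' := hsubI hy
      have hx' : x ≤ sSup c.1 := le_csSup hbddc hx
      simp only [Set.mem_Icc] at hy'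
      omega
    · by_cases h2' : sSup qmax.1 < sInf c.1
      · right
        intro x hx y hy
        have hx' := hsubI hx
        have hy' : sInf c.1 ≤ y := Nat.sInf_le hy
        simp only [Set.mem_Icc] at hx'
        omega
      · exfalso
        push_neg at h1' h2'
        by_cases h3 : sInf qmin.1 ≤ sInf c.1
        · exact Set.disjoint_left.mp hd ha₀ ⟨h3, h2'⟩
        · push_neg at h3
          have hαΓ : sInf qmin.1 ∈ Γ :=
            hB.sub qmin (hRsub hqminR) (Nat.sInf_mem (hB.ne qmin (hRsub hqminR)))
          have hαc : sInf qmin.1 ∈ c.1 := hI.2.2.1 ⟨⟨le_of_lt h3, h1'⟩, hαΓ⟩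
          have hαβ : sInf qmin.1 ≤ sSup qmax.1 := by
            obtain ⟨w, hw⟩ := hne
            have := hsubI hw
            simp only [Set.mem_Icc] at this
            omega
          exact Set.disjoint_left.mp hd hαc ⟨le_rfl, hαβ⟩
  have hnn1 : ∀ R R' : Set Clu, IsRun B t R → IsRun B t R' →
      1 ≤ (runClu Γ ℓ R).2 → 1 ≤ (runClu Γ ℓ R').2 →
      (∀ q, q ∈ R → q ∈ R' → False) →
      sInf (runClu Γ ℓ R).1 < sInf (runClu Γ ℓ R').1 →
      cluLT (runClu Γ ℓ R).1 (runClu Γ ℓ R').1 := by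
    intro R R' hR hR' hm hm' hdisj hlt
    obtain ⟨qmin, qmax, hqminR, hqmaxR, hfin, hRsub, hmm, hspan, hc1, hsinf, hssup,
      hne, hsubI⟩ := runData hB hmass ℓ hR hm
    obtain ⟨qmin', qmax', hqminR', hqmaxR', hfin', hRsub', hmm', hspan', hc1', hsinf',
      hssup', hne', hsubI'⟩ := runData hB hmass ℓ hR' hm'
    rw [hsinf, hsinf'] at hlt
    have hkey : sInf qmax.1 < sInf qmin'.1 := by
      by_contra hc
      push_neg at hc
      have hne1 : qmin' ≠ qmax := fun h => hdisj qmax hqmaxR (h ▸ hqminR')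
      have hstrict : sInf qmin'.1 < sInf qmax.1 :=
        lt_of_le_of_ne hc fun h =>
          hne1 (hB.key_inj (hRsub' hqminR') (hRsub hqmaxR) h)
      obtain ⟨p, hpB, hReq, -⟩ := hR
      have hbR : qmin' ∈ runOf B t p :=
        hB.inBetween (hReq ▸ hqminR) (hReq ▸ hqmaxR) (hRsub' hqminR') hlt hstrict
      exact hdisj qmin' (hReq ▸ hbR) hqminR'
    have hne2 : qmax ≠ qmin' := fun h => hdisj qmax hqmaxR (h ▸ hqminR')
    have hltq : cluLT qmax.1 qmin'.1 :=
      (hB.lt_iff (hRsub hqmaxR) (hRsub' hqminR') hne2).mpr hkey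
    have hss := hB.sSup_lt_sInf (hRsub hqmaxR) (hRsub' hqminR') hltq
    intro x hx y hy
    have h1x := hsubI hx
    have h2y := hsubI' hy
    simp only [Set.mem_Icc] at h1x h2y
    omega
  constructor
  · intro c hc
    simp only [nextPart, ← hBdef, ← htdef, Set.mem_union, Set.mem_setOf_eq,
      Set.mem_sep_iff] at hc
    rcases hc with ⟨R, hR, rfl⟩ | ⟨hcS, -⟩
    · exact hnewInv R hR
    · exact h1 c hcS
  · intro c hc d hd hc2 hd2 hne
    simp only [nextPart, ← hBdef, ← htdef, Set.mem_union, Set.mem_setOf_eq,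
      Set.mem_sep_iff] at hc hd
    rcases hc with ⟨R, hR, rfl⟩ | ⟨hcS, hck⟩
    · rcases hd with ⟨R', hR', rfl⟩ | ⟨hdS, hdk⟩
      · -- two new clusters
        have hdisj : ∀ q, q ∈ R → q ∈ R' → False := by
          intro q hq hq'
          apply hne
          obtain ⟨p, hpB, hReq, -⟩ := hR
          obtain ⟨p', hpB', hReq', -⟩ := hR'
          have : R = R' := by
            rw [hReq, hReq']
            exact runOf_eq_of_mem (hReq ▸ hq) (hReq' ▸ hq')
          rw [this]
        rcases lt_trichotomy (sInf (runClu Γ ℓ R).1) (sInf (runClu Γ ℓ R').1) with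
          h | h | h
        · exact Or.inl (hnn1 R R' hR hR' hc2 hd2 hdisj h)
        · exfalso
          obtain ⟨qmin, qmax, hqminR, hqmaxR, hfin, hRsub, hmm, hspan, hc1, hsinf,
            hssup, hne0, hsubI⟩ := runData hB hmass ℓ hR hc2
          obtain ⟨qmin', qmax', hqminR', hqmaxR', hfin', hRsub', hmm', hspan', hc1',
            hsinf', hssup', hne0', hsubI'⟩ := runData hB hmass ℓ hR' hd2
          rw [hsinf, hsinf'] at h
          exact hdisj qmin hqminR
            ((hB.key_inj (hRsub hqminR) (hRsub' hqminR') h) ▸ hqminR')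
        · exact Or.inr (hnn1 R' R hR' hR hd2 hc2 (fun q hq hq' => hdisj q hq' hq) h)
      · -- c new, d kept
        exact (hkn d hdS hdk hd2 R hR hc2).symm
    · rcases hd with ⟨R', hR', rfl⟩ | ⟨hdS, hdk⟩
      · exact hkn c hcS hck hc2 R' hR' hd2
      · exact h2 c hcS d hdS hc2 hd2 hne

lemma invAll (hΓ : 0 ∉ Γ) :
    ∀ ℓ : ℕ, (∀ c ∈ parts Γ M ℓ, Inv1 Γ M c) ∧ OrdOn (parts Γ M ℓ) := by
  intro ℓ
  induction ℓ with
  | zero =>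
    constructor
    · rintro c ⟨x, hx, rfl⟩
      have hxin : x ∈ Γ := hx
      refine ⟨by simpa using hxin, Set.finite_singleton x, ?_, ?_⟩
      · intro y hy
        obtain ⟨hy1, hy2⟩ := hy
        rw [spanI, csInf_singleton, csSup_singleton] at hy1
        simp only [Set.Icc_self, Set.mem_singleton_iff] at hy1
        simp [hy1]
      · intro _
        refine ⟨⟨x, rfl⟩, [x], [], COK.single x, ?_, ?_, ?_, ?_, ?_⟩
        · simp [csInf_singleton]
        · simp [csSup_singleton]
        · simpa using hxin
        · simp
        · simp
    · rintro c ⟨x, hx, rfl⟩ d ⟨y, hy, rfl⟩ - - hne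
      have hxy : x ≠ y := fun h => hne (by rw [h])
      rcases Nat.lt_or_ge x y with h | h
      · left
        intro a ha b hb
        simp only [Set.mem_singleton_iff] at ha hb
        omega
      · right
        intro a ha b hb
        simp only [Set.mem_singleton_iff] at ha hb
        omega
  | succ ℓ ih =>
    have := step_inv hΓ ℓ ih.1 ih.2
    simpa only [parts] using this

end MainInd
/-! ### The union bound and series -/

def stepsOK (M : ℕ) (l : List (ℕ × ℕ)) : Prop :=
  ∀ s ∈ l, 1 ≤ s.1 ∧ 1 ≤ s.2 ∧ s.2 < M ^ s.1

def ValidL (M z k : ℕ) (l : List (ℕ × ℕ)) : Prop :=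
  stepsOK M l ∧ 1 ≤ z ∧ k ≤ l.length + 1 ∧
    (l.map Prod.fst).sum + k + 1 ≤ 2 * (l.length + 1)

open scoped Classical in
noncomputable def EvL (M z k : ℕ) (l : List (ℕ × ℕ)) : Set (ℕ → Bool) :=
  if ValidL M z k l then {ξ | ∀ x ∈ ptsList z l, ξ (x - 1) = true} else ∅

noncomputable def wStep (M : ℕ) (p : ℝ) (s : ℕ × ℕ) : ℝ≥0∞ :=
  if 1 ≤ s.1 ∧ 1 ≤ s.2 ∧ s.2 < M ^ s.1 then
    ENNReal.ofReal (4 * p * (M : ℝ) ^ 2 * (1 / (2 * M)) ^ s.1) else 0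

lemma tsum_shift (f : ℕ → ℝ≥0∞) (a : ℕ) :
    ∑' n, (if a ≤ n then f (n - a) else 0) = ∑' m, f m := by
  induction a generalizing f with
  | zero => simp
  | succ a iha =>
    rw [tsum_eq_zero_add' ENNReal.summable]
    have h0 : (if a + 1 ≤ 0 then f (0 - (a + 1)) else 0) = 0 := by simp
    rw [h0, zero_add]
    have h1 : ∀ n : ℕ, (if a + 1 ≤ n + 1 then f (n + 1 - (a + 1)) else 0) =
        (if a ≤ n then f (n - a) else 0) := by
      intro n
      by_cases h : a ≤ n
      · rw [if_pos (by omega), if_pos h]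
        congr 1
        omega
      · rw [if_neg (by omega), if_neg h]
    rw [tsum_congr h1, iha]

lemma tsum_pi_prod (w : ℕ × ℕ → ℝ≥0∞) :
    ∀ n, (∑' f : Fin n → ℕ × ℕ, ∏ i, w (f i)) = (∑' b, w b) ^ n := by
  intro n
  induction n with
  | zero =>
    rw [pow_zero]
    rw [tsum_eq_single (fun i => i.elim0) ?_]
    · simp
    · intro f hf
      exact absurd (Subsingleton.elim f _) hf
  | succ n ih =>
    rw [← (Fin.consEquiv (fun _ => ℕ × ℕ)).tsum_eq (fun f => ∏ i, w (f i))]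
    have h1 : ∀ x : (ℕ × ℕ) × (Fin n → ℕ × ℕ),
        (∏ i, w (((Fin.consEquiv (fun _ => ℕ × ℕ)) x) i)) = w x.1 * ∏ i, w (x.2 i) := by
      rintro ⟨a, g⟩
      rw [Fin.prod_univ_succ]
      simp only [Fin.consEquiv, Equiv.coe_fn_mk, Fin.cons_zero, Fin.cons_succ]
    rw [tsum_congr h1, ENNReal.tsum_prod']
    have h2 : ∀ a : ℕ × ℕ, (∑' g : Fin n → ℕ × ℕ, w a * ∏ i, w (g i)) =
        w a * (∑' b, w b) ^ n := by
      intro a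
      rw [ENNReal.tsum_mul_left, ih]
    rw [tsum_congr h2, ENNReal.tsum_mul_right, pow_succ]
    ring

lemma tsum_wStep_le {M : ℕ} {p : ℝ} (hM : 3 ≤ M) (hp : 0 ≤ p) :
    (∑' s : ℕ × ℕ, wStep M p s) ≤ ENNReal.ofReal (4 * p * (M : ℝ) ^ 2) := by
  have hMR : (1 : ℝ) ≤ (M : ℝ) := by exact_mod_cast Nat.one_le_iff_ne_zero.mpr (by omega)
  have hMpos : (0 : ℝ) < M := by linarith
  have hc1 : (0 : ℝ) ≤ 4 * p * (M : ℝ) ^ 2 := by positivity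
  rw [ENNReal.tsum_prod']
  have hinner : ∀ e : ℕ, (∑' g : ℕ, wStep M p (e, g)) ≤
      (if 1 ≤ e then ENNReal.ofReal (4 * p * (M : ℝ) ^ 2 * (1 / 2) ^ e) else 0) := by
    intro e
    by_cases he : 1 ≤ e
    · rw [if_pos he]
      have hz : ∀ g ∉ Finset.range (M ^ e), wStep M p (e, g) = 0 := by
        intro g hg
        simp only [Finset.mem_range, not_lt] at hg
        rw [wStep, if_neg]
        push_neg
        intro _ _
        exact hg
      rw [tsum_eq_sum hz]
      have hterm : ∀ g ∈ Finset.range (M ^ e), wStep M p (e, g) ≤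
          ENNReal.ofReal (4 * p * (M : ℝ) ^ 2 * (1 / (2 * M)) ^ e) := by
        intro g _
        rw [wStep]
        split
        · exact le_rfl
        · exact zero_le
      calc ∑ g ∈ Finset.range (M ^ e), wStep M p (e, g)
          ≤ ∑ _g ∈ Finset.range (M ^ e),
            ENNReal.ofReal (4 * p * (M : ℝ) ^ 2 * (1 / (2 * M)) ^ e) :=
            Finset.sum_le_sum hterm
        _ = (M ^ e : ℕ) * ENNReal.ofReal (4 * p * (M : ℝ) ^ 2 * (1 / (2 * M)) ^ e) := by
            rw [Finset.sum_const, Finset.card_range, nsmul_eq_mul]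
        _ = ENNReal.ofReal (((M : ℝ) ^ e) * (4 * p * (M : ℝ) ^ 2 * (1 / (2 * M)) ^ e)) := by
            rw [← ENNReal.ofReal_natCast (M ^ e),
              ← ENNReal.ofReal_mul (by positivity : (0:ℝ) ≤ ((M ^ e : ℕ) : ℝ))]
            congr 1
            push_cast
            ring
        _ = ENNReal.ofReal (4 * p * (M : ℝ) ^ 2 * (1 / 2) ^ e) := by
            congr 1
            have hppow : (M : ℝ) ^ e * (1 / (2 * M)) ^ e = (1 / 2) ^ e := by
              rw [← mul_pow]
              congr 1
              field_simp
            calc (M : ℝ) ^ e * (4 * p * (M : ℝ) ^ 2 * (1 / (2 * M)) ^ e)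
                = 4 * p * (M : ℝ) ^ 2 * ((M : ℝ) ^ e * (1 / (2 * M)) ^ e) := by ring
              _ = 4 * p * (M : ℝ) ^ 2 * (1 / 2) ^ e := by rw [hppow]
    · rw [if_neg he]
      have : ∀ g : ℕ, wStep M p (e, g) = 0 := by
        intro g
        rw [wStep, if_neg]
        push_neg
        intro h
        exact absurd h he
      simp [this]
  calc (∑' e : ℕ, ∑' g : ℕ, wStep M p (e, g))
      ≤ ∑' e : ℕ, (if 1 ≤ e then ENNReal.ofReal (4 * p * (M : ℝ) ^ 2 * (1 / 2) ^ e) else 0) :=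
        ENNReal.tsum_le_tsum hinner
    _ = ENNReal.ofReal (4 * p * (M : ℝ) ^ 2) *
        ∑' e : ℕ, (if 1 ≤ e then ENNReal.ofReal ((1 / 2 : ℝ) ^ e) else 0) := by
        rw [← ENNReal.tsum_mul_left]
        congr 1
        ext e
        by_cases he : 1 ≤ e
        · rw [if_pos he, if_pos he, ← ENNReal.ofReal_mul hc1]
        · rw [if_neg he, if_neg he, mul_zero]
    _ ≤ ENNReal.ofReal (4 * p * (M : ℝ) ^ 2) * 1 := by
        apply mul_le_mul_right
        have hhalf : (ENNReal.ofReal (1 / 2 : ℝ)) < 1 := by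
          rw [ENNReal.ofReal_lt_one]
          norm_num
        rw [tsum_eq_zero_add' ENNReal.summable]
        have h0 : (if (1 : ℕ) ≤ 0 then ENNReal.ofReal ((1 / 2 : ℝ) ^ 0) else 0) = 0 := by
          simp
        rw [h0, zero_add]
        have h1 : ∀ e : ℕ, (if 1 ≤ e + 1 then ENNReal.ofReal ((1 / 2 : ℝ) ^ (e + 1)) else 0) =
            ENNReal.ofReal (1 / 2 : ℝ) * (ENNReal.ofReal (1 / 2 : ℝ)) ^ e := by
          intro e
          rw [if_pos (by omega), pow_succ, ← ENNReal.ofReal_pow (by norm_num)]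
          rw [← ENNReal.ofReal_mul (by positivity)]
          congr 1
          ring
        rw [tsum_congr h1, ENNReal.tsum_mul_left, ENNReal.tsum_geometric]
        have h2 : (1 : ℝ≥0∞) - ENNReal.ofReal (1 / 2 : ℝ) = ENNReal.ofReal (1 / 2 : ℝ) := by
          rw [← ENNReal.ofReal_one, ← ENNReal.ofReal_sub _ (by norm_num : (0:ℝ) ≤ 1/2)]
          norm_num
        rw [h2, ENNReal.mul_inv_cancel]
        · simp [ENNReal.ofReal_pos]
        · exact ENNReal.ofReal_ne_top
    _ = ENNReal.ofReal (4 * p * (M : ℝ) ^ 2) := mul_one _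
lemma event_subset (M z k : ℕ) (hk : 1 ≤ k) :
    {ξ : ℕ → Bool | ∃ c : Clu, (∃ ℓ, 1 ≤ ℓ ∧ IsLevelCluster (Gamma ξ) M ℓ c) ∧
      sInf c.1 = z ∧ c.2 = k} ⊆ ⋃ l : List (ℕ × ℕ), EvL M z k l := by
  intro ξ hξ
  obtain ⟨c, ⟨ℓ, hℓ, hc, -⟩, hzc, hkc⟩ := hξ
  have hΓ0 : (0 : ℕ) ∉ Gamma ξ := by
    intro h
    exact absurd h.1 (by omega)
  have hInv := (invAll (M := M) hΓ0 ℓ).1 c hc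
  have hc2 : 1 ≤ c.2 := by omega
  obtain ⟨-, P, E, hcok, hhead, hlast, hmemΓ, hm1, hm2⟩ := hInv.2.2.2 hc2
  obtain ⟨l, hllen, hlval, hlsum, hlpts⟩ := hcok.toSteps
  rw [hzc] at hhead
  have hpts : ptsList z l = P := hlpts z hhead
  have hzP : z ∈ P := List.mem_of_mem_head? (by rw [hhead]; rfl)
  have hz1 : 1 ≤ z := (hmemΓ z hzP).1
  have hPlen : P.length = E.length + 1 := hcok.length_eq
  have hval : ValidL M z k l := by
    refine ⟨hlval, hz1, by omega, ?_⟩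
    rw [hlsum]
    omega
  refine Set.mem_iUnion.mpr ⟨l, ?_⟩
  rw [EvL, if_pos hval]
  intro x hx
  rw [hpts] at hx
  exact (hmemΓ x hx).2

lemma EvL_measure {M z k : ℕ} {p : ℝ} (μ : Measure (ℕ → Bool))
    (hμ : IsBernoulliProduct μ p) (l : List (ℕ × ℕ)) (hval : ValidL M z k l) :
    μ (EvL M z k l) = ENNReal.ofReal p ^ (l.length + 1) := by
  classical
  rw [EvL, if_pos hval]
  have hchain : List.Chain' (· < ·) (ptsList z l) :=
    ptsList_chain z l fun s hs => (hval.1 s hs).2.1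
  have hge : ∀ x ∈ ptsList z l, 1 ≤ x :=
    fun x hx => le_trans hval.2.1 (ptsList_le z l x hx)
  have hpw : List.Pairwise (· < ·) (ptsList z l) := List.isChain_iff_pairwise.mp hchain
  have hnodup : ((ptsList z l).map (· - 1)).Nodup := by
    rw [List.Nodup, List.pairwise_map]
    refine List.Pairwise.imp_of_mem ?_ hpw
    intro a b ha hb hlt
    have := hge a ha
    omega
  set s : Finset ℕ := ((ptsList z l).map (· - 1)).toFinset with hs
  have hcard : s.card = l.length + 1 := by
    rw [hs, List.toFinset_card_of_nodup hnodup, List.length_map, ptsList_length]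
  have hset : {ξ : ℕ → Bool | ∀ x ∈ ptsList z l, ξ (x - 1) = true} =
      {ξ : ℕ → Bool | ∀ i ∈ s, ξ i = (fun _ => true) i} := by
    ext ξ
    simp only [Set.mem_setOf_eq, hs, List.mem_toFinset, List.mem_map]
    constructor
    · rintro h i ⟨x, hx, rfl⟩
      exact h x hx
    · intro h x hx
      exact h (x - 1) ⟨x, hx, rfl⟩
  rw [hset, hμ.2 s (fun _ => true)]
  have : ∀ i ∈ s, ENNReal.ofReal (if (fun _ : ℕ => true) i then p else 1 - p) =
      ENNReal.ofReal p := by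
    intro i _
    simp
  rw [Finset.prod_congr rfl this, Finset.prod_const, hcard]

lemma prod_wStep {M : ℕ} {p : ℝ} (hp : 0 ≤ p) (hM : 3 ≤ M) (l : List (ℕ × ℕ))
    (hsteps : stepsOK M l) :
    (l.map (wStep M p)).prod =
      ENNReal.ofReal ((4 * p * (M : ℝ) ^ 2) ^ l.length *
        (1 / (2 * M)) ^ ((l.map Prod.fst).sum)) := by
  have hMpos : (0 : ℝ) < M := by
    have : (3 : ℝ) ≤ M := by exact_mod_cast hM
    linarith
  induction l with
  | nil => simp
  | cons a l ih =>
    have hsteps' : stepsOK M l := fun s hs => hsteps s (List.mem_cons_of_mem _ hs)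
    have ha := hsteps a List.mem_cons_self
    rw [List.map_cons, List.prod_cons, ih hsteps', wStep, if_pos ha,
      ← ENNReal.ofReal_mul (by positivity)]
    congr 1
    simp only [List.map_cons, List.sum_cons, List.length_cons]
    rw [pow_succ, pow_add]
    ring
lemma series_bound {M k : ℕ} {p : ℝ} (hM : 3 ≤ M) (hp : 0 ≤ p) (hk : 1 ≤ k) :
    (∑' l : List (ℕ × ℕ),
        (if k ≤ l.length + 1 then (l.map (wStep M p)).prod else 0)) ≤
      ENNReal.ofReal (4 * p * (M : ℝ) ^ 2) ^ (k - 1) *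
        (1 - ENNReal.ofReal (4 * p * (M : ℝ) ^ 2))⁻¹ := by
  set F : List (ℕ × ℕ) → ℝ≥0∞ :=
    fun l => if k ≤ l.length + 1 then (l.map (wStep M p)).prod else 0 with hF
  have heq := (List.equivSigmaTuple (α := ℕ × ℕ)).symm.tsum_eq F
  rw [← heq, ENNReal.tsum_sigma']
  have hinner : ∀ n : ℕ, (∑' f : Fin n → ℕ × ℕ, F (List.equivSigmaTuple.symm ⟨n, f⟩)) =
      (if k ≤ n + 1 then (∑' b : ℕ × ℕ, wStep M p b) ^ n else 0) := by
    intro n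
    have hF2 : ∀ f : Fin n → ℕ × ℕ, F (List.equivSigmaTuple.symm ⟨n, f⟩) =
        (if k ≤ n + 1 then ∏ i, wStep M p (f i) else 0) := by
      intro f
      have h1 : (List.equivSigmaTuple.symm ⟨n, f⟩ : List (ℕ × ℕ)) = List.ofFn f := rfl
      rw [hF, h1]
      simp only [List.length_ofFn]
      congr 1
      rw [List.map_ofFn, List.prod_ofFn]
      rfl
    rw [tsum_congr hF2]
    by_cases hkn : k ≤ n + 1
    · simp only [if_pos hkn]
      exact tsum_pi_prod (wStep M p) n
    · simp only [if_neg hkn]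
      exact tsum_zero
  rw [tsum_congr hinner]
  have hle : ∀ n : ℕ, (if k ≤ n + 1 then (∑' b : ℕ × ℕ, wStep M p b) ^ n else 0) ≤
      (if k - 1 ≤ n then (ENNReal.ofReal (4 * p * (M : ℝ) ^ 2)) ^ (k - 1) *
        (ENNReal.ofReal (4 * p * (M : ℝ) ^ 2)) ^ (n - (k - 1)) else 0) := by
    intro n
    by_cases hkn : k ≤ n + 1
    · rw [if_pos hkn, if_pos (by omega), ← pow_add]
      have h2 : k - 1 + (n - (k - 1)) = n := by omega
      rw [h2]
      exact pow_le_pow_left' (tsum_wStep_le hM hp) n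
    · rw [if_neg hkn, if_neg (by omega)]
  refine le_trans (ENNReal.tsum_le_tsum hle) ?_
  rw [tsum_shift (fun m => (ENNReal.ofReal (4 * p * (M : ℝ) ^ 2)) ^ (k - 1) *
    (ENNReal.ofReal (4 * p * (M : ℝ) ^ 2)) ^ m) (k - 1)]
  rw [ENNReal.tsum_mul_left, ENNReal.tsum_geometric]

theorem statement_13' (M : ℕ) (hM : 3 ≤ M) (p : ℝ) (hp : 0 ≤ p)
    (hpM : 64 * p * (M : ℝ) ^ 2 < 1)
    (μ : Measure (ℕ → Bool)) (hμ : IsBernoulliProduct μ p) (z k : ℕ) (hk : 1 ≤ k) :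
    μ {ξ | ∃ c : Clu, (∃ ℓ, 1 ≤ ℓ ∧ IsLevelCluster (Gamma ξ) M ℓ c) ∧
        sInf c.1 = z ∧ c.2 = k}
      ≤ ENNReal.ofReal (32 * (2 * p * M) ^ k /
          ((1 - 4 * p * (M : ℝ) ^ 2) * (1 - 64 * p * (M : ℝ) ^ 2))) := by
  have hMR3 : (3 : ℝ) ≤ M := by exact_mod_cast hM
  have hMpos : (0 : ℝ) < M := by linarith
  have hpM2 : (0 : ℝ) ≤ p * (M : ℝ) ^ 2 := by positivity
  have hc1nn : (0 : ℝ) ≤ 4 * p * (M : ℝ) ^ 2 := by positivity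
  have hc1lt : 4 * p * (M : ℝ) ^ 2 < 1 := by nlinarith
  have htlt : 64 * p * (M : ℝ) ^ 2 < 1 := hpM
  have htnn : (0 : ℝ) ≤ 64 * p * (M : ℝ) ^ 2 := by positivity
  have hd1 : (0 : ℝ) < 1 - 4 * p * (M : ℝ) ^ 2 := by linarith
  have hd2 : (0 : ℝ) < 1 - 64 * p * (M : ℝ) ^ 2 := by linarith
  have per_l : ∀ l : List (ℕ × ℕ), μ (EvL M z k l) ≤
      (if k ≤ l.length + 1 then
        ENNReal.ofReal (p * (1 / (2 * (M : ℝ))) ^ (k - 1)) *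
          (l.map (wStep M p)).prod else 0) := by
    intro l
    by_cases hval : ValidL M z k l
    · rw [EvL_measure μ hμ l hval, if_pos hval.2.2.1, prod_wStep hp hM l hval.1,
        ← ENNReal.ofReal_mul (by positivity), ← ENNReal.ofReal_pow hp]
      apply ENNReal.ofReal_le_ofReal
      have hr : (0 : ℝ) < 1 / (2 * M) := by positivity
      have hr1 : (1 : ℝ) / (2 * M) ≤ 1 := by
        rw [div_le_one (by linarith)]
        linarith
      have hS : k - 1 + (l.map Prod.fst).sum ≤ 2 * l.length := by
        have := hval.2.2.2
        omega
      have hpow : (1 / (2 * (M : ℝ))) ^ (2 * l.length) ≤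
          (1 / (2 * M)) ^ (k - 1 + (l.map Prod.fst).sum) :=
        pow_le_pow_of_le_one (le_of_lt hr) hr1 hS
      have hkey : (4 * p * (M : ℝ) ^ 2) * (1 / (2 * M)) ^ 2 = p := by
        field_simp
        ring
      calc p ^ (l.length + 1)
          = p * ((4 * p * (M : ℝ) ^ 2) * (1 / (2 * M)) ^ 2) ^ l.length := by
            rw [hkey]
            ring
        _ = p * (4 * p * (M : ℝ) ^ 2) ^ l.length * (1 / (2 * M)) ^ (2 * l.length) := by
            rw [mul_pow, ← pow_mul]
            ring_nf
        _ ≤ p * (4 * p * (M : ℝ) ^ 2) ^ l.length *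
            (1 / (2 * M)) ^ (k - 1 + (l.map Prod.fst).sum) := by
            apply mul_le_mul_of_nonneg_left hpow (by positivity)
        _ = (p * (1 / (2 * M)) ^ (k - 1)) *
            ((4 * p * (M : ℝ) ^ 2) ^ l.length * (1 / (2 * M)) ^ ((l.map Prod.fst).sum)) := by
            rw [pow_add]
            ring
    · rw [EvL, if_neg hval]
      simp
  calc μ {ξ | ∃ c : Clu, (∃ ℓ, 1 ≤ ℓ ∧ IsLevelCluster (Gamma ξ) M ℓ c) ∧
        sInf c.1 = z ∧ c.2 = k}
      ≤ μ (⋃ l : List (ℕ × ℕ), EvL M z k l) :=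
        measure_mono (event_subset M z k hk)
    _ ≤ ∑' l : List (ℕ × ℕ), μ (EvL M z k l) := measure_iUnion_le _
    _ ≤ ∑' l : List (ℕ × ℕ),
        (if k ≤ l.length + 1 then
          ENNReal.ofReal (p * (1 / (2 * (M : ℝ))) ^ (k - 1)) *
            (l.map (wStep M p)).prod else 0) := ENNReal.tsum_le_tsum per_l
    _ = ENNReal.ofReal (p * (1 / (2 * (M : ℝ))) ^ (k - 1)) *
        ∑' l : List (ℕ × ℕ),
          (if k ≤ l.length + 1 then (l.map (wStep M p)).prod else 0) := by
        rw [← ENNReal.tsum_mul_left]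
        apply tsum_congr
        intro l
        split <;> simp
    _ ≤ ENNReal.ofReal (p * (1 / (2 * (M : ℝ))) ^ (k - 1)) *
        (ENNReal.ofReal (4 * p * (M : ℝ) ^ 2) ^ (k - 1) *
          (1 - ENNReal.ofReal (4 * p * (M : ℝ) ^ 2))⁻¹) :=
        mul_le_mul_right (series_bound hM hp hk) _
    _ ≤ ENNReal.ofReal (32 * (2 * p * M) ^ k /
          ((1 - 4 * p * (M : ℝ) ^ 2) * (1 - 64 * p * (M : ℝ) ^ 2))) := by
        have h1S : (1 : ℝ≥0∞) - ENNReal.ofReal (4 * p * (M : ℝ) ^ 2) =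
            ENNReal.ofReal (1 - 4 * p * (M : ℝ) ^ 2) := by
          rw [ENNReal.ofReal_sub _ hc1nn, ENNReal.ofReal_one]
        rw [h1S, ← ENNReal.ofReal_inv_of_pos hd1, ← ENNReal.ofReal_pow hc1nn,
          ← ENNReal.ofReal_mul (by positivity), ← ENNReal.ofReal_mul (by positivity)]
        apply ENNReal.ofReal_le_ofReal
        have hcomb : (1 / (2 * (M : ℝ))) ^ (k - 1) * (4 * p * (M : ℝ) ^ 2) ^ (k - 1) =
            (2 * p * M) ^ (k - 1) := by
          rw [← mul_pow]
          congr 1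
          field_simp
          ring
        have hA : (0 : ℝ) ≤ (2 * p * (M : ℝ)) ^ (k - 1) := by positivity
        have hksplit : (2 * p * (M : ℝ)) ^ k = (2 * p * M) ^ (k - 1) * (2 * p * M) := by
          conv_lhs => rw [show k = k - 1 + 1 by omega]
          rw [pow_succ]
        calc p * (1 / (2 * (M : ℝ))) ^ (k - 1) * ((4 * p * (M : ℝ) ^ 2) ^ (k - 1) *
              (1 - 4 * p * (M : ℝ) ^ 2)⁻¹)
            = p * (2 * p * M) ^ (k - 1) * (1 - 4 * p * (M : ℝ) ^ 2)⁻¹ := by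
              rw [← hcomb]
              ring
          _ = p * (2 * p * M) ^ (k - 1) / (1 - 4 * p * (M : ℝ) ^ 2) := by
              rw [div_eq_mul_inv]
          _ ≤ 32 * (2 * p * M) ^ k /
              ((1 - 4 * p * (M : ℝ) ^ 2) * (1 - 64 * p * (M : ℝ) ^ 2)) := by
              rw [div_le_div_iff₀ hd1 (by positivity)]
              rw [hksplit]
              nlinarith [mul_nonneg hp hA, mul_nonneg (mul_nonneg hp hA) htnn,
                mul_nonneg (mul_nonneg hp hA) (by linarith : (0 : ℝ) ≤ 64 * M - 1),
                mul_nonneg (mul_nonneg (mul_nonneg hp hA)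
                  (by linarith : (0 : ℝ) ≤ 64 * M - 1)) (le_of_lt hd1),
                mul_nonneg (mul_nonneg (mul_nonneg hp hA) htnn) (le_of_lt hd1)]
theorem statement_13 (M : ℕ) (hM : 3 ≤ M) (p : ℝ) (hp : 0 ≤ p)
    (hpM : 64 * p * (M : ℝ) ^ 2 < 1)
    (μ : Measure (ℕ → Bool)) (hμ : IsBernoulliProduct μ p) (z k : ℕ) (hk : 1 ≤ k) :
    μ {ξ | ∃ c : Clu, (∃ ℓ, 1 ≤ ℓ ∧ IsLevelCluster (Gamma ξ) M ℓ c) ∧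
        sInf c.1 = z ∧ c.2 = k}
      ≤ ENNReal.ofReal (32 * (2 * p * M) ^ k /
          ((1 - 4 * p * (M : ℝ) ^ 2) * (1 - 64 * p * (M : ℝ) ^ 2))) :=
  statement_13' M hM p hp hpM μ hμ z k hk

end Paper
end

section
/- In the grouping construction with spacing parameter M (an integer ≥ 3), every cluster C (of any level ℓ ≥ 0 of the construction) with mass m(C) = k satisfies diam(C) < 3M^{k−1}; consequently, for 0 < p < 1/(64M²) and ξ ∈ Ξ(p), sup{|C| : C ∈ 𝐂_∞, m(C) = k} ≤ 3M^{k−1} for all k ∈ ℕ. -/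
open Filter Set MeasureTheory
open scoped ENNReal NNReal

namespace Paper

/-! ### Auxiliary lemmas for statement 14 -/

section Aux14

variable {M k : ℕ} {Γ : Set ℕ} {S : Set Clu}

lemma aux14_dist_le {a b n : ℕ} (ha : a ≤ n) (hb : b ≤ n) : Nat.dist a b ≤ n := by
  have : Nat.dist a b = a - b + (b - a) := rfl
  omega

lemma aux14_sdiam_le {C : Set ℕ} {n : ℕ} (h : ∀ a ∈ C, ∀ b ∈ C, Nat.dist a b ≤ n) :
    sdiam C ≤ n := by
  unfold sdiam
  refine csSup_le' ?_
  rintro d ⟨a, ha, b, hb, rfl⟩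
  exact h a ha b hb

lemma aux14_le_sdiam {C : Set ℕ} (hC : BddAbove C) {a b : ℕ} (ha : a ∈ C) (hb : b ∈ C) :
    Nat.dist a b ≤ sdiam C := by
  unfold sdiam
  obtain ⟨m, hm⟩ := hC
  refine le_csSup ⟨m, ?_⟩ ⟨a, ha, b, hb, rfl⟩
  rintro d ⟨x, hx, y, hy, rfl⟩
  exact aux14_dist_le (hm hx) (hm hy)

lemma aux14_cluDist_comm (C D : Set ℕ) : cluDist C D = cluDist D C := by
  unfold cluDist
  congr 1
  ext d
  constructor
  · rintro ⟨a, ha, b, hb, rfl⟩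
    exact ⟨b, hb, a, ha, Nat.dist_comm a b⟩
  · rintro ⟨a, ha, b, hb, rfl⟩
    exact ⟨b, hb, a, ha, Nat.dist_comm a b⟩

lemma aux14_cluDist_exists {C D : Set ℕ} (hC : C.Nonempty) (hD : D.Nonempty) :
    ∃ a ∈ C, ∃ b ∈ D, Nat.dist a b = cluDist C D := by
  unfold cluDist
  obtain ⟨a, ha⟩ := hC
  obtain ⟨b, hb⟩ := hD
  have hne : {d | ∃ a ∈ C, ∃ b ∈ D, d = Nat.dist a b}.Nonempty := ⟨_, a, ha, b, hb, rfl⟩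
  have hmem := Nat.sInf_mem hne
  obtain ⟨a', ha', b', hb', h⟩ := hmem
  exact ⟨a', ha', b', hb', h.symm⟩

/-- Invariant satisfied by every cluster of the grouping construction. -/
structure CluInv (M : ℕ) (Γ : Set ℕ) (c : Clu) : Prop where
  subset : c.1 ⊆ Γ
  conv : ∃ a b : ℕ, c.1 = Set.Icc a b ∩ Γ
  nonempty : 1 ≤ c.2 → c.1.Nonempty
  diam : sdiam c.1 < 3 * M ^ (c.2 - 1)

lemma CluInv.finite {c : Clu} (h : CluInv M Γ c) : c.1.Finite := by
  obtain ⟨a, b, hab⟩ := h.conv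
  exact (Set.finite_Icc a b).subset (hab ▸ Set.inter_subset_left)

lemma aux14_between {c d : Clu} (hc : CluInv M Γ c) (hd : CluInv M Γ d)
    (hdisj : Disjoint c.1 d.1) {a1 a2 b : ℕ} (ha1 : a1 ∈ c.1) (ha2 : a2 ∈ c.1)
    (hb : b ∈ d.1) (h1 : a1 ≤ b) (h2 : b ≤ a2) : False := by
  obtain ⟨x, y, hxy⟩ := hc.conv
  have hbΓ : b ∈ Γ := hd.subset hb
  rw [hxy] at ha1 ha2
  have hbc : b ∈ c.1 := by
    rw [hxy]
    exact ⟨⟨le_trans ha1.1.1 h1, le_trans h2 ha2.1.2⟩, hbΓ⟩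
  exact Set.disjoint_left.mp hdisj hbc hb

lemma aux14_compare {c d : Clu} (hc : CluInv M Γ c) (hd : CluInv M Γ d)
    (hdisj : Disjoint c.1 d.1) : cluLT c.1 d.1 ∨ cluLT d.1 c.1 := by
  by_contra h
  push_neg at h
  obtain ⟨h1, h2⟩ := h
  unfold cluLT at h1 h2
  push_neg at h1 h2
  obtain ⟨a1, ha1, b1, hb1, hle1⟩ := h1
  obtain ⟨b2, hb2, a2, ha2, hle2⟩ := h2
  by_cases hcase : a1 ≤ b2
  · exact aux14_between hd hc hdisj.symm hb1 hb2 ha1 hle1 hcase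
  · exact aux14_between hc hd hdisj ha2 ha1 hb2 hle2 (le_of_not_ge hcase)

lemma aux14_B_nonempty (hSinv : ∀ c ∈ S, CluInv M Γ c) {q : Clu}
    (hq : q ∈ {q ∈ S | k + 1 ≤ q.2}) : q.1.Nonempty :=
  (hSinv q hq.1).nonempty (le_trans (Nat.le_add_left 1 k) hq.2)

lemma aux14_adjStep_symm {B : Set Clu} {t : ℕ} : Symmetric (adjStep B t) := by
  rintro p q ⟨hp, hq, hd, hor⟩
  exact ⟨hq, hp, by rwa [aux14_cluDist_comm], hor.symm⟩

lemma aux14_runOf_subset {B : Set Clu} {t : ℕ} {p : Clu} : runOf B t p ⊆ B :=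
  fun _ h => h.1

lemma aux14_runOf_closed {B : Set Clu} {t : ℕ} {p x y : Clu}
    (hx : x ∈ runOf B t p) (hxy : adjStep B t x y) : y ∈ runOf B t p :=
  ⟨hxy.2.1, hx.2.tail hxy⟩

lemma aux14_runOf_conn {B : Set Clu} {t : ℕ} {p x y : Clu}
    (hx : x ∈ runOf B t p) (hy : y ∈ runOf B t p) :
    Relation.ReflTransGen (adjStep B t) x y :=
  ((@Relation.ReflTransGen.symmetric _ _ ⟨fun _ _ h => aux14_adjStep_symm h⟩).symm _ _ hx.2).trans hy.2

lemma aux14_runOf_eq {B : Set Clu} {t : ℕ} {p q : Clu} (hq : q ∈ runOf B t p) :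
    runOf B t q = runOf B t p := by
  ext r
  constructor
  · rintro ⟨hr, hqr⟩
    exact ⟨hr, hq.2.trans hqr⟩
  · rintro ⟨hr, hpr⟩
    exact ⟨hr, ((@Relation.ReflTransGen.symmetric _ _ ⟨fun _ _ h => aux14_adjStep_symm h⟩).symm _ _ hq.2).trans hpr⟩

lemma aux14_runs_disjoint {B : Set Clu} {t : ℕ} {R R' : Set Clu}
    (hR : IsRun B t R) (hR' : IsRun B t R') (hne : R ≠ R') {q : Clu}
    (hq : q ∈ R) (hq' : q ∈ R') : False := by
  obtain ⟨p, hp, rfl, -⟩ := hR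
  obtain ⟨p', hp', rfl, -⟩ := hR'
  exact hne ((aux14_runOf_eq hq).symm.trans (aux14_runOf_eq hq'))

lemma aux14_cross_aux {B : Set Clu} {t : ℕ} {p q0 : Clu}
    (hcomp : ∀ x ∈ runOf B t p, cluLT x.1 q0.1 ∨ cluLT q0.1 x.1)
    (hq0ne : q0.1.Nonempty) (hRne : ∀ x ∈ runOf B t p, x.1.Nonempty)
    {a b : Clu} (hab : Relation.ReflTransGen (adjStep B t) a b)
    (hbQ : cluLT q0.1 b.1) (hb : b ∈ runOf B t p) :
    a ∈ runOf B t p → cluLT a.1 q0.1 →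
      ∃ x y : Clu, adjStep B t x y ∧ cluLT x.1 q0.1 ∧ cluLT q0.1 y.1 := by
  induction hab using Relation.ReflTransGen.head_induction_on with
  | refl =>
    intro hbmem hP
    obtain ⟨u, hu⟩ := hRne b hb
    obtain ⟨w, hw⟩ := hq0ne
    have h1 := hP u hu w hw
    have h2 := hbQ w hw u hu
    omega
  | head hstep hrest ih =>
    intro ha hP
    have hcmem := aux14_runOf_closed ha hstep
    rcases hcomp _ hcmem with hc | hc
    · exact ih hcmem hc
    · exact ⟨_, _, hstep, hP, hc⟩

lemma aux14_no_cross (hSinv : ∀ c ∈ S, CluInv M Γ c)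
    (hSdisj : ∀ c ∈ S, ∀ d ∈ S, c ≠ d → Disjoint c.1 d.1)
    {t : ℕ} {R : Set Clu} (hR : IsRun {q ∈ S | k + 1 ≤ q.2} t R)
    {q0 r1 r2 : Clu} (hq0 : q0 ∈ {q ∈ S | k + 1 ≤ q.2}) (hq0R : q0 ∉ R)
    (hr1 : r1 ∈ R) (hr2 : r2 ∈ R)
    (h1 : cluLT r1.1 q0.1) (h2 : cluLT q0.1 r2.1) : False := by
  obtain ⟨p, hp, rfl, -⟩ := hR
  have hq0ne : q0.1.Nonempty := aux14_B_nonempty hSinv hq0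
  have hRne : ∀ x ∈ runOf {q ∈ S | k + 1 ≤ q.2} t p, x.1.Nonempty := fun x hx =>
    aux14_B_nonempty hSinv (aux14_runOf_subset hx)
  have hcomp : ∀ x ∈ runOf {q ∈ S | k + 1 ≤ q.2} t p,
      cluLT x.1 q0.1 ∨ cluLT q0.1 x.1 := by
    intro x hx
    have hxS : x ∈ S := (aux14_runOf_subset hx).1
    have hne : x ≠ q0 := fun h => hq0R (h ▸ hx)
    exact aux14_compare (hSinv x hxS) (hSinv q0 hq0.1) (hSdisj x hxS q0 hq0.1 hne)
  obtain ⟨x, y, hxy, hxP, hyQ⟩ :=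
    aux14_cross_aux hcomp hq0ne hRne (aux14_runOf_conn hr1 hr2) h2 hr2 hr1 h1
  rcases hxy.2.2.2 with ⟨hlt, hblock⟩ | ⟨hlt, hblock⟩
  · exact hblock q0 hq0 ⟨hxP, hyQ⟩
  · obtain ⟨u, hu⟩ := aux14_B_nonempty hSinv hxy.1
    obtain ⟨v, hv⟩ := aux14_B_nonempty hSinv hxy.2.1
    obtain ⟨w, hw⟩ := hq0ne
    have e1 := hxP u hu w hw
    have e2 := hyQ w hw v hv
    have e3 := hlt v hv u hu
    omega

lemma aux14_not_in_span (hSinv : ∀ c ∈ S, CluInv M Γ c)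
    (hSdisj : ∀ c ∈ S, ∀ d ∈ S, c ≠ d → Disjoint c.1 d.1)
    {t : ℕ} {R : Set Clu} (hR : IsRun {q ∈ S | k + 1 ≤ q.2} t R)
    (hUfin : (⋃ r ∈ R, r.1).Finite) (hUne : (⋃ r ∈ R, r.1).Nonempty)
    {q : Clu} (hq : q ∈ {q ∈ S | k + 1 ≤ q.2}) (hqR : q ∉ R)
    {x : ℕ} (hx : x ∈ q.1) :
    x < sInf (⋃ r ∈ R, r.1) ∨ sSup (⋃ r ∈ R, r.1) < x := by
  set U := ⋃ r ∈ R, r.1 with hU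
  by_contra hcon
  push_neg at hcon
  obtain ⟨hge, hle⟩ := hcon
  have hRB : R ⊆ {q ∈ S | k + 1 ≤ q.2} := by
    obtain ⟨p, hp, rfl, -⟩ := hR
    exact aux14_runOf_subset
  have hcompR : ∀ r ∈ R, cluLT r.1 q.1 ∨ cluLT q.1 r.1 := by
    intro r hrR
    have hrB := hRB hrR
    have hne : r ≠ q := fun h => hqR (h ▸ hrR)
    exact aux14_compare (hSinv r hrB.1) (hSinv q hq.1) (hSdisj _ hrB.1 _ hq.1 hne)
  have hmemU : ∀ u ∈ U, ∃ r ∈ R, u ∈ r.1 := by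
    intro u hu
    rw [hU] at hu
    simpa using hu
  have hr1 : ∃ r1 ∈ R, cluLT r1.1 q.1 := by
    by_contra hno
    push_neg at hno
    have hall : ∀ u ∈ U, x < u := by
      intro u hu
      obtain ⟨r, hr, hur⟩ := hmemU u hu
      rcases hcompR r hr with hlt | hlt
      · exact absurd hlt (hno r hr)
      · exact hlt x hx u hur
    have hmem := Nat.sInf_mem hUne
    have := hall _ hmem
    omega
  have hr2 : ∃ r2 ∈ R, cluLT q.1 r2.1 := by
    by_contra hno
    push_neg at hno
    have hall : ∀ u ∈ U, u < x := by
      intro u hu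
      obtain ⟨r, hr, hur⟩ := hmemU u hu
      rcases hcompR r hr with hlt | hlt
      · exact hlt u hur x hx
      · exact absurd hlt (hno r hr)
    have hmem := Nat.sSup_mem hUne hUfin.bddAbove
    have := hall _ hmem
    omega
  obtain ⟨r1, hr1R, hlt1⟩ := hr1
  obtain ⟨r2, hr2R, hlt2⟩ := hr2
  exact aux14_no_cross hSinv hSdisj hR hq hqR hr1R hr2R hlt1 hlt2

lemma aux14_runs_span_disjoint (hSinv : ∀ c ∈ S, CluInv M Γ c)
    (hSdisj : ∀ c ∈ S, ∀ d ∈ S, c ≠ d → Disjoint c.1 d.1)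
    {t : ℕ} {R R' : Set Clu}
    (hR : IsRun {q ∈ S | k + 1 ≤ q.2} t R) (hR' : IsRun {q ∈ S | k + 1 ≤ q.2} t R')
    (hne : R ≠ R') (hfin : R.Finite) (hfin' : R'.Finite) :
    Disjoint (spanI (⋃ r ∈ R, r.1) ∩ Γ) (spanI (⋃ r ∈ R', r.1) ∩ Γ) := by
  have hRc := hR; have hRc' := hR'
  obtain ⟨p, hp, hRdef, -⟩ := hRc
  obtain ⟨p', hp', hRdef', -⟩ := hRc'
  have hpR : p ∈ R := by rw [hRdef]; exact ⟨hp, Relation.ReflTransGen.refl⟩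
  have hpR' : p' ∈ R' := by rw [hRdef']; exact ⟨hp', Relation.ReflTransGen.refl⟩
  have hRB : R ⊆ {q ∈ S | k + 1 ≤ q.2} := by rw [hRdef]; exact aux14_runOf_subset
  have hRB' : R' ⊆ {q ∈ S | k + 1 ≤ q.2} := by rw [hRdef']; exact aux14_runOf_subset
  set U := ⋃ r ∈ R, r.1 with hU
  set U' := ⋃ r ∈ R', r.1 with hU'
  have hqinv : ∀ q ∈ R, CluInv M Γ q := fun q hq => hSinv q (hRB hq).1
  have hqinv' : ∀ q ∈ R', CluInv M Γ q := fun q hq => hSinv q (hRB' hq).1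
  have hqne : ∀ q ∈ R, q.1.Nonempty := fun q hq => aux14_B_nonempty hSinv (hRB hq)
  have hqne' : ∀ q ∈ R', q.1.Nonempty := fun q hq => aux14_B_nonempty hSinv (hRB' hq)
  have hUfin : U.Finite := hfin.biUnion fun q hq => (hqinv q hq).finite
  have hUfin' : U'.Finite := hfin'.biUnion fun q hq => (hqinv' q hq).finite
  have hUne : U.Nonempty := by
    obtain ⟨x, hx⟩ := hqne p hpR
    exact ⟨x, Set.mem_biUnion hpR hx⟩
  have hUne' : U'.Nonempty := by
    obtain ⟨x, hx⟩ := hqne' p' hpR'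
    exact ⟨x, Set.mem_biUnion hpR' hx⟩
  have hkey : ∀ r' ∈ R', ∀ x ∈ r'.1, x < sInf U ∨ sSup U < x := by
    intro r' hr' x hx
    have hnotR : r' ∉ R := fun hmem => aux14_runs_disjoint hR hR' hne hmem hr'
    exact aux14_not_in_span hSinv hSdisj hR hUfin hUne (hRB' hr') hnotR hx
  have hside : ∀ r' ∈ R', (∀ x ∈ r'.1, x < sInf U) ∨ (∀ x ∈ r'.1, sSup U < x) := by
    intro r' hr'
    by_contra hcon
    push_neg at hcon
    obtain ⟨⟨x1, hx1, hge1⟩, ⟨x2, hx2, hle2⟩⟩ := hcon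
    rcases hkey r' hr' x1 hx1 with h | h
    · omega
    rcases hkey r' hr' x2 hx2 with h2 | h2
    swap
    · omega
    obtain ⟨b, hb⟩ := hqne p hpR
    have hbU : b ∈ U := Set.mem_biUnion hpR hb
    have hb1 : sInf U ≤ b := Nat.sInf_le hbU
    have hb2 : b ≤ sSup U := le_csSup hUfin.bddAbove hbU
    have hnotR : r' ∉ R := fun hmem => aux14_runs_disjoint hR hR' hne hmem hr'
    have hner : r' ≠ p := fun hh => hnotR (hh ▸ hpR)
    have hdisj' : Disjoint r'.1 p.1 := hSdisj r' (hRB' hr').1 p (hRB hpR).1 hner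
    exact aux14_between (hqinv' r' hr') (hqinv p hpR) hdisj' hx2 hx1 hb (by omega) (by omega)
  have hallside : (∀ x ∈ U', x < sInf U) ∨ (∀ x ∈ U', sSup U < x) := by
    by_contra hcon
    push_neg at hcon
    obtain ⟨⟨y1, hy1, hge1⟩, ⟨y2, hy2, hle2⟩⟩ := hcon
    obtain ⟨r1', hr1', hy1r⟩ : ∃ r ∈ R', y1 ∈ r.1 := by simpa [hU'] using hy1
    obtain ⟨r2', hr2', hy2r⟩ : ∃ r ∈ R', y2 ∈ r.1 := by simpa [hU'] using hy2
    have h1 : ∀ x ∈ r1'.1, sSup U < x := by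
      rcases hside r1' hr1' with h | h
      · exact absurd (h y1 hy1r) (by omega)
      · exact h
    have h2 : ∀ x ∈ r2'.1, x < sInf U := by
      rcases hside r2' hr2' with h | h
      · exact h
      · exact absurd (h y2 hy2r) (by omega)
    have hpnotR' : p ∉ R' := fun hmem => aux14_runs_disjoint hR hR' hne hpR hmem
    have hlt1 : cluLT r2'.1 p.1 := by
      intro a ha b hb
      have hbU : b ∈ U := Set.mem_biUnion hpR hb
      have hb1 := Nat.sInf_le hbU
      have ha1 := h2 a ha
      omega
    have hlt2 : cluLT p.1 r1'.1 := by
      intro a ha b hb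
      have haU : a ∈ U := Set.mem_biUnion hpR ha
      have ha1 := le_csSup hUfin.bddAbove haU
      have hb1 := h1 b hb
      omega
    exact aux14_no_cross hSinv hSdisj hR' (hRB hpR) hpnotR' hr2' hr1' hlt1 hlt2
  rw [Set.disjoint_left]
  rintro z ⟨hz1, hzΓ⟩ ⟨hz2, -⟩
  simp only [spanI, Set.mem_Icc] at hz1 hz2
  rcases hallside with h | h
  · have hs := Nat.sSup_mem hUne' hUfin'.bddAbove
    have := h _ hs
    omega
  · have hs := Nat.sInf_mem hUne'
    have := h _ hs
    omega

/-! #### Walks along a run -/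

/-- The adjacency graph on clusters used to extract simple paths inside a run. -/
def runGraph (B : Set Clu) (t : ℕ) : SimpleGraph Clu := SimpleGraph.fromRel (adjStep B t)

lemma aux14_reachable {B : Set Clu} {t : ℕ} {a b : Clu}
    (h : Relation.ReflTransGen (adjStep B t) a b) : (runGraph B t).Reachable a b := by
  induction h with
  | refl => exact SimpleGraph.Reachable.refl _
  | tail hrest hstep ih =>
    rename_i c d
    by_cases hcd : c = d
    · exact hcd ▸ ih
    · exact ih.trans (SimpleGraph.Adj.reachable
        ((SimpleGraph.fromRel_adj _ _ _).mpr ⟨hcd, Or.inl hstep⟩))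

lemma aux14_adj_dist {B : Set Clu} {t : ℕ} {a b : Clu}
    (h : (runGraph B t).Adj a b) : cluDist a.1 b.1 ≤ t - 1 := by
  rcases (SimpleGraph.fromRel_adj _ _ _).mp h with ⟨-, h | h⟩
  · have := h.2.2.1; omega
  · have := h.2.2.1; rw [aux14_cluDist_comm]; omega

lemma aux14_walk_support {B : Set Clu} {t : ℕ} {p : Clu} {a b : Clu}
    (w : (runGraph B t).Walk a b) :
    a ∈ runOf B t p → ∀ v ∈ w.support, v ∈ runOf B t p := by
  induction w with
  | nil =>
    intro ha v hv
    rw [SimpleGraph.Walk.support_nil, List.mem_singleton] at hv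
    exact hv ▸ ha
  | cons hadj w' ih =>
    rename_i uu vv ww
    intro ha v hv
    rw [SimpleGraph.Walk.support_cons] at hv
    rcases List.mem_cons.mp hv with rfl | hv'
    · exact ha
    · have hadj' : adjStep B t uu vv := by
        rcases (SimpleGraph.fromRel_adj _ _ _).mp hadj with ⟨-, h | h⟩
        exacts [h, aux14_adjStep_symm h]
      exact ih (aux14_runOf_closed ha hadj') v hv'

lemma aux14_chain_dist {s : ℕ} : ∀ (L : List Clu) (hL : L ≠ [])
    (_ : List.Chain' (fun u v : Clu => cluDist u.1 v.1 ≤ s) L)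
    (_ : ∀ q ∈ L, q.1.Nonempty ∧ q.1.Finite),
    ∀ a ∈ (L.head hL).1, ∀ b ∈ (L.getLast hL).1,
      Nat.dist a b ≤ (L.map fun q => sdiam q.1).sum + (L.length - 1) * s
  | [], hL, _, _ => absurd rfl hL
  | [x], _, _, hmem => by
    intro a ha b hb
    have hfin := (hmem x (by simp)).2
    have := aux14_le_sdiam hfin.bddAbove ha hb
    simpa using this
  | x :: y :: rest, _, hch, hmem => by
    intro a ha b hb
    have hd : cluDist x.1 y.1 ≤ s := (List.isChain_cons_cons.mp hch).1
    have hch' := (List.isChain_cons_cons.mp hch).2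
    obtain ⟨u, hu, v, hv, huv⟩ :=
      aux14_cluDist_exists (hmem x (by simp)).1 (hmem y (by simp)).1
    have hxfin := (hmem x (by simp)).2
    have ih := aux14_chain_dist (y :: rest) (by simp) hch'
      (fun q hq => hmem q (List.mem_cons_of_mem _ hq)) v (by simpa using hv) b
      (by rwa [List.getLast_cons (by simp)] at hb)
    have t1 : Nat.dist a b ≤ Nat.dist a v + Nat.dist v b := Nat.dist.triangle_inequality _ _ _
    have t2 : Nat.dist a v ≤ Nat.dist a u + Nat.dist u v := Nat.dist.triangle_inequality _ _ _
    have t3 : Nat.dist a u ≤ sdiam x.1 := aux14_le_sdiam hxfin.bddAbove ha hu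
    have t4 : Nat.dist u v ≤ s := by omega
    have harith : ((x :: y :: rest).length - 1) * s = ((y :: rest).length - 1) * s + s := by
      simp only [List.length_cons, Nat.add_sub_cancel]
      rw [Nat.succ_mul]
    simp only [List.map_cons, List.sum_cons] at ih ⊢
    rw [harith]
    have hexp := ih
    omega

/-! #### Numeric inequalities -/

lemma aux14_two_term {M : ℕ} (hM : 3 ≤ M) {X Y : ℕ} (hX : 1 ≤ X) (hY : 1 ≤ Y) :
    3 * X + 3 * Y + M ≤ 3 * (X * Y * M) := by
  have h1 : 3 * X ≤ X * Y * M := by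
    have h : 1 * 3 ≤ Y * M := Nat.mul_le_mul hY hM
    calc 3 * X = X * (1 * 3) := by ring
      _ ≤ X * (Y * M) := Nat.mul_le_mul_left X h
      _ = X * Y * M := by ring
  have h2 : 3 * Y ≤ X * Y * M := by
    have h : 1 * 3 ≤ X * M := Nat.mul_le_mul hX hM
    calc 3 * Y = Y * (1 * 3) := by ring
      _ ≤ Y * (X * M) := Nat.mul_le_mul_left Y h
      _ = X * Y * M := by ring
  have h3 : M ≤ X * Y * M := by
    have h : 1 * 1 ≤ X * Y := Nat.mul_le_mul hX hY
    calc M = 1 * 1 * M := by ring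
      _ ≤ X * Y * M := Nat.mul_le_mul_right M h
  linarith

lemma aux14_key_ineq {M : ℕ} {ι : Type} (hM : 3 ≤ M) (P : Finset ι) (f : ι → ℕ) :
    P.Nonempty → (∀ q ∈ P, 1 ≤ f q) →
    (∑ q ∈ P, 3 * M ^ (f q - 1)) + (P.card - 1) * M ≤ 3 * M ^ ((∑ q ∈ P, f q) - 1) := by
  classical
  induction P using Finset.cons_induction with
  | empty => exact fun hP _ => absurd hP (by simp)
  | cons x P hx ih =>
    intro _ hf
    rcases P.eq_empty_or_nonempty with rfl | hPne
    · simp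
    · have hfP : ∀ q ∈ P, 1 ≤ f q := fun q hq => hf q (Finset.mem_cons_of_mem hq)
      have ihP := ih hPne hfP
      have hfx : 1 ≤ f x := hf x (Finset.mem_cons_self x P)
      have hA1 : 1 ≤ ∑ q ∈ P, f q := by
        obtain ⟨q0, hq0⟩ := hPne
        calc 1 ≤ f q0 := hfP q0 hq0
          _ ≤ ∑ q ∈ P, f q :=
            Finset.single_le_sum (f := f) (fun _ _ => Nat.zero_le _) hq0
      have hX : 1 ≤ M ^ (f x - 1) := Nat.one_le_pow _ _ (by omega)
      have hY : 1 ≤ M ^ ((∑ q ∈ P, f q) - 1) := Nat.one_le_pow _ _ (by omega)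
      have htt := aux14_two_term hM hX hY
      have hpow : M ^ (f x - 1) * M ^ ((∑ q ∈ P, f q) - 1) * M
          = M ^ (f x + (∑ q ∈ P, f q) - 1) := by
        rw [← pow_add, ← pow_succ]
        congr 1
        omega
      rw [Finset.sum_cons, Finset.sum_cons, Finset.card_cons]
      have hcard : 1 ≤ P.card := hPne.card_pos
      have hc : P.card + 1 - 1 = (P.card - 1) + 1 := by omega
      rw [hc, Nat.succ_mul]
      rw [hpow] at htt
      linarith

lemma aux14_key_shift {M : ℕ} (hM : 3 ≤ M) {k : ℕ} {P : Finset Clu} (hP : P.Nonempty)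
    (hmass : ∀ q ∈ P, k + 1 ≤ q.2) :
    (∑ q ∈ P, 3 * M ^ (q.2 - 1)) + (P.card - 1) * M ^ (k + 1)
      ≤ 3 * M ^ ((∑ q ∈ P, (q.2 - k)) + k - 1) := by
  have h := aux14_key_ineq hM P (fun q => q.2 - k) hP (fun q hq => by
    have := hmass q hq
    show 1 ≤ q.2 - k
    omega)
  have h2 := Nat.mul_le_mul_right (M ^ k) h
  have hA1 : 1 ≤ ∑ q ∈ P, (q.2 - k) := by
    obtain ⟨q0, hq0⟩ := hP
    have h1 : 1 ≤ q0.2 - k := by have := hmass q0 hq0; omega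
    calc 1 ≤ q0.2 - k := h1
      _ ≤ ∑ q ∈ P, (q.2 - k) :=
        Finset.single_le_sum (f := fun q => q.2 - k) (fun _ _ => Nat.zero_le _) hq0
  calc (∑ q ∈ P, 3 * M ^ (q.2 - 1)) + (P.card - 1) * M ^ (k + 1)
      = (∑ q ∈ P, 3 * M ^ ((q.2 - k) - 1)) * M ^ k + ((P.card - 1) * M) * M ^ k := by
        rw [Finset.sum_mul]
        congr 1
        · refine Finset.sum_congr rfl fun q hq => ?_
          have hq2 := hmass q hq
          have he : q.2 - 1 = q.2 - k - 1 + k := by omega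
          rw [Nat.mul_assoc, ← pow_add, he]
        · rw [Nat.mul_assoc, ← pow_succ']
    _ ≤ (3 * M ^ ((∑ q ∈ P, (q.2 - k)) - 1)) * M ^ k := by
        rw [← Nat.add_mul]
        exact h2
    _ = 3 * M ^ ((∑ q ∈ P, (q.2 - k)) + k - 1) := by
        rw [Nat.mul_assoc, ← pow_add]
        congr 2
        omega

lemma aux14_numeric_main {M : ℕ} (hM : 3 ≤ M) {k : ℕ} {P F : Finset Clu}
    (hPF : P ⊆ F) (hPne : P.Nonempty) (hmass : ∀ q ∈ F, k + 1 ≤ q.2) :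
    (∑ q ∈ P, (3 * M ^ (q.2 - 1) - 1)) + (P.card - 1) * (M ^ (k + 1) - 1)
      < 3 * M ^ ((∑ q ∈ F, (q.2 - k)) + k - 1) := by
  have h1 : (∑ q ∈ P, (3 * M ^ (q.2 - 1) - 1)) + P.card = ∑ q ∈ P, 3 * M ^ (q.2 - 1) := by
    have hterm : ∀ q ∈ P, (3 * M ^ (q.2 - 1) - 1) + 1 = 3 * M ^ (q.2 - 1) := by
      intro q hq
      have h0 : 0 < 3 * M ^ (q.2 - 1) :=
        Nat.mul_pos (by norm_num) (pow_pos (by omega : (0:ℕ) < M) _)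
      omega
    calc (∑ q ∈ P, (3 * M ^ (q.2 - 1) - 1)) + P.card
        = ∑ q ∈ P, ((3 * M ^ (q.2 - 1) - 1) + 1) := by
          rw [Finset.sum_add_distrib, Finset.sum_const, smul_eq_mul, mul_one]
      _ = ∑ q ∈ P, 3 * M ^ (q.2 - 1) := Finset.sum_congr rfl hterm
  have h2 := aux14_key_shift hM hPne (fun q hq => hmass q (hPF hq))
  have h3 : (∑ q ∈ P, (q.2 - k)) ≤ ∑ q ∈ F, (q.2 - k) :=
    Finset.sum_le_sum_of_subset hPF
  have hA1 : 1 ≤ ∑ q ∈ P, (q.2 - k) := by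
    obtain ⟨q0, hq0⟩ := hPne
    have h0 : 1 ≤ q0.2 - k := by have := hmass q0 (hPF hq0); omega
    calc 1 ≤ q0.2 - k := h0
      _ ≤ ∑ q ∈ P, (q.2 - k) :=
        Finset.single_le_sum (f := fun q => q.2 - k) (fun _ _ => Nat.zero_le _) hq0
  have h4 : 3 * M ^ ((∑ q ∈ P, (q.2 - k)) + k - 1)
      ≤ 3 * M ^ ((∑ q ∈ F, (q.2 - k)) + k - 1) :=
    Nat.mul_le_mul_left 3 (Nat.pow_le_pow_right (by omega) (by omega))
  have h5 : (P.card - 1) * (M ^ (k + 1) - 1) ≤ (P.card - 1) * M ^ (k + 1) :=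
    Nat.mul_le_mul_left _ (by omega)
  have h6 : 1 ≤ P.card := hPne.card_pos
  linarith

lemma aux14_head_of_eq {α : Type*} {l t : List α} {a : α} (h : l = a :: t) (hne : l ≠ []) :
    l.head hne = a := by subst h; rfl

/-! #### Diameter bound for a finite run -/

lemma aux14_run_diam (hM : 3 ≤ M) (hΓ : ∀ n ∈ Γ, 1 ≤ n)
    (hSinv : ∀ c ∈ S, CluInv M Γ c)
    (hSdisj : ∀ c ∈ S, ∀ d ∈ S, c ≠ d → Disjoint c.1 d.1)
    {R : Set Clu} (hR : IsRun {q ∈ S | k + 1 ≤ q.2} (M ^ (k + 1)) R)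
    (hfin : R.Finite) :
    sdiam (spanI (⋃ q ∈ R, q.1) ∩ Γ)
      < 3 * M ^ ((∑ᶠ q ∈ R, q.2) - k * (Nat.card R - 1) - 1) := by
  classical
  have hRc := hR
  obtain ⟨p, hp, hRdef, -⟩ := hRc
  have hpR : p ∈ R := by rw [hRdef]; exact ⟨hp, Relation.ReflTransGen.refl⟩
  have hRB : R ⊆ {q ∈ S | k + 1 ≤ q.2} := by rw [hRdef]; exact aux14_runOf_subset
  have hqinv : ∀ q ∈ R, CluInv M Γ q := fun q hq => hSinv q (hRB hq).1
  have hqne : ∀ q ∈ R, q.1.Nonempty := fun q hq => aux14_B_nonempty hSinv (hRB hq)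
  set U := ⋃ q ∈ R, q.1 with hU
  have hUfin : U.Finite := hfin.biUnion fun q hq => (hqinv q hq).finite
  have hUne : U.Nonempty := by
    obtain ⟨x, hx⟩ := hqne p hpR
    exact ⟨x, Set.mem_biUnion hpR hx⟩
  set F := hfin.toFinset with hF
  have hmemF : ∀ q : Clu, q ∈ F ↔ q ∈ R := fun q => hfin.mem_toFinset
  have hmassF : ∀ q ∈ F, k + 1 ≤ q.2 := fun q hq => (hRB ((hmemF q).mp hq)).2
  have hFne : F.Nonempty := ⟨p, (hmemF p).mpr hpR⟩
  -- mass identity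
  have hsum : (∑ᶠ q ∈ R, q.2) = ∑ q ∈ F, q.2 := by
    rw [← hfin.coe_toFinset, finsum_mem_coe_finset]
  have hcard : Nat.card R = F.card := by
    rw [Nat.card_coe_set_eq, Set.ncard_eq_toFinset_card _ hfin]
  have hsum2 : ∑ q ∈ F, q.2 = (∑ q ∈ F, (q.2 - k)) + F.card * k := by
    rw [← Finset.sum_const_nat (m := k) (fun _ _ => rfl), ← Finset.sum_add_distrib]
    exact Finset.sum_congr rfl fun q hq => by have := hmassF q hq; omega
  have hmass_eq : (∑ᶠ q ∈ R, q.2) - k * (Nat.card R - 1)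
      = (∑ q ∈ F, (q.2 - k)) + k := by
    rw [hsum, hcard, hsum2]
    have hc1 : 1 ≤ F.card := hFne.card_pos
    have hkn : k * (F.card - 1) + k = F.card * k := by
      have h : F.card - 1 + 1 = F.card := by omega
      calc k * (F.card - 1) + k = k * ((F.card - 1) + 1) := by rw [Nat.mul_succ]
        _ = k * F.card := by rw [h]
        _ = F.card * k := Nat.mul_comm _ _
    rw [← hkn]
    generalize k * (F.card - 1) = Q
    omega
  -- endpoints of the span
  obtain ⟨qmax, hqmaxR, hqmax⟩ : ∃ q ∈ R, sSup U ∈ q.1 := by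
    have h := Nat.sSup_mem hUne hUfin.bddAbove
    rw [hU] at h
    simpa using h
  obtain ⟨qmin, hqminR, hqmin⟩ : ∃ q ∈ R, sInf U ∈ q.1 := by
    have h := Nat.sInf_mem hUne
    rw [hU] at h
    simpa using h
  -- extract a simple path from qmin to qmax
  have hqmin' : qmin ∈ runOf {q ∈ S | k + 1 ≤ q.2} (M ^ (k + 1)) p := by
    rw [← hRdef]; exact hqminR
  have hqmax' : qmax ∈ runOf {q ∈ S | k + 1 ≤ q.2} (M ^ (k + 1)) p := by
    rw [← hRdef]; exact hqmaxR
  obtain ⟨w⟩ := aux14_reachable (aux14_runOf_conn hqmin' hqmax')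
  set w' := w.bypass with hw'
  have hwpath : w'.IsPath := SimpleGraph.Walk.bypass_isPath w
  set L := w'.support with hLdef
  have hLne : L ≠ [] := w'.support_ne_nil
  have hLhead : L.head hLne = qmin := aux14_head_of_eq w'.support_eq_cons hLne
  have hLlast : L.getLast hLne = qmax := w'.getLast_support
  have hLnodup : L.Nodup := hwpath.support_nodup
  have hLmem : ∀ v ∈ L, v ∈ R := by
    intro v hv
    have hv' : v ∈ w.support :=
      SimpleGraph.Walk.support_bypass_subset w (by rw [← hw']; exact hLdef ▸ hv)
    rw [hRdef]
    exact aux14_walk_support w hqmin' v hv'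
  have hLch : List.Chain' (fun u v : Clu => cluDist u.1 v.1 ≤ M ^ (k + 1) - 1) L :=
    (w'.isChain_adj_support).imp fun a b hadj => aux14_adj_dist hadj
  have hmemL : ∀ q ∈ L, q.1.Nonempty ∧ q.1.Finite := fun q hq =>
    ⟨hqne q (hLmem q hq), (hqinv q (hLmem q hq)).finite⟩
  have hdist := aux14_chain_dist L hLne hLch hmemL (sInf U) (hLhead ▸ hqmin)
    (sSup U) (hLlast ▸ hqmax)
  -- pass to finsets
  set P := L.toFinset with hPdef
  have hPsub : P ⊆ F := fun q hq => (hmemF q).mpr (hLmem q (List.mem_toFinset.mp hq))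
  have hPne : P.Nonempty :=
    ⟨qmin, List.mem_toFinset.mpr (by rw [← hLhead]; exact List.head_mem hLne)⟩
  have hsumL : (L.map fun q => sdiam q.1).sum = ∑ q ∈ P, sdiam q.1 :=
    (List.sum_toFinset _ hLnodup).symm
  have hlenL : L.length = P.card := (List.toFinset_card_of_nodup hLnodup).symm
  have hdq : ∀ q ∈ P, sdiam q.1 ≤ 3 * M ^ (q.2 - 1) - 1 := by
    intro q hq
    have h := (hqinv q ((hmemF q).mp (hPsub hq))).diam
    omega
  -- final chain of inequalities
  have hstep1 : sdiam (spanI U ∩ Γ) ≤ Nat.dist (sInf U) (sSup U) := by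
    apply aux14_sdiam_le
    intro a ha b hb
    simp only [spanI, Set.mem_inter_iff, Set.mem_Icc] at ha hb
    have e1 : Nat.dist a b = a - b + (b - a) := rfl
    have e2 : Nat.dist (sInf U) (sSup U) = sInf U - sSup U + (sSup U - sInf U) := rfl
    have h1 := ha.1.1; have h2 := ha.1.2; have h3 := hb.1.1; have h4 := hb.1.2
    omega
  have hfinal : sdiam (spanI U ∩ Γ) < 3 * M ^ ((∑ q ∈ F, (q.2 - k)) + k - 1) := by
    calc sdiam (spanI U ∩ Γ) ≤ Nat.dist (sInf U) (sSup U) := hstep1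
      _ ≤ (L.map fun q => sdiam q.1).sum + (L.length - 1) * (M ^ (k + 1) - 1) := hdist
      _ = (∑ q ∈ P, sdiam q.1) + (P.card - 1) * (M ^ (k + 1) - 1) := by rw [hsumL, hlenL]
      _ ≤ (∑ q ∈ P, (3 * M ^ (q.2 - 1) - 1)) + (P.card - 1) * (M ^ (k + 1) - 1) :=
          Nat.add_le_add_right (Finset.sum_le_sum hdq) _
      _ < 3 * M ^ ((∑ q ∈ F, (q.2 - k)) + k - 1) := aux14_numeric_main hM hPsub hPne hmassF
  have hrw : 3 * M ^ ((∑ q ∈ F, (q.2 - k)) + k - 1)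
      = 3 * M ^ ((∑ᶠ q ∈ R, q.2) - k * (Nat.card R - 1) - 1) := by
    rw [hmass_eq]
  exact hrw ▸ hfinal
/-! #### Infinite runs produce the empty cluster of mass zero -/

lemma aux14_run_infinite (hΓ : ∀ n ∈ Γ, 1 ≤ n)
    (hSinv : ∀ c ∈ S, CluInv M Γ c)
    (hSdisj : ∀ c ∈ S, ∀ d ∈ S, c ≠ d → Disjoint c.1 d.1)
    {t : ℕ} {R : Set Clu} (hR : IsRun {q ∈ S | k + 1 ≤ q.2} t R)
    (hinf : ¬ R.Finite) :
    spanI (⋃ q ∈ R, q.1) ∩ Γ = ∅ ∧ (∑ᶠ q ∈ R, q.2) - k * (Nat.card R - 1) = 0 := by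
  obtain ⟨p, hp, hRdef, -⟩ := hR
  have hRB : R ⊆ {q ∈ S | k + 1 ≤ q.2} := by rw [hRdef]; exact aux14_runOf_subset
  have hqne : ∀ q ∈ R, q.1.Nonempty := fun q hq => aux14_B_nonempty hSinv (hRB hq)
  set U := ⋃ q ∈ R, q.1 with hU
  have hUnb : ¬ BddAbove U := by
    intro hbdd
    obtain ⟨m, hm⟩ := hbdd
    have hUfin : U.Finite := (Set.finite_Iic m).subset fun x hx => hm hx
    have hinj : Set.InjOn (fun q : Clu => q.1) R := by
      intro q hq q' hq' h
      change q.1 = q'.1 at h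
      by_contra hne
      have hd := hSdisj q (hRB hq).1 q' (hRB hq').1 hne
      obtain ⟨x, hx⟩ := hqne q hq
      exact Set.disjoint_left.mp hd hx (h ▸ hx)
    have himgfin : ((fun q : Clu => q.1) '' R).Finite := by
      refine hUfin.finite_subsets.subset ?_
      rintro s ⟨q, hq, rfl⟩
      exact fun x hx => Set.mem_biUnion hq hx
    exact hinf (Set.Finite.of_finite_image himgfin hinj)
  have hsup0 : sSup U = 0 := by
    rw [csSup_of_not_bddAbove hUnb, csSup_empty]
    rfl
  constructor
  · ext x
    simp only [Set.mem_inter_iff, Set.mem_empty_iff_false, iff_false, not_and]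
    intro hsp hxΓ
    simp only [spanI, Set.mem_Icc, hsup0] at hsp
    have h1 := hΓ x hxΓ
    omega
  · have hsupp : (R ∩ Function.support fun q : Clu => q.2).Infinite := by
      have heq : R ∩ (Function.support fun q : Clu => q.2) = R := by
        apply Set.inter_eq_self_of_subset_left
        intro q hq
        have := (hRB hq).2
        simp only [Function.mem_support]
        omega
      rw [heq]
      exact fun h => hinf h
    rw [finsum_mem_eq_zero_of_infinite hsupp]
    simp

/-! #### The induction on levels -/

lemma aux14_step (hM : 3 ≤ M) (hΓ : ∀ n ∈ Γ, 1 ≤ n)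
    (hSinv : ∀ c ∈ S, CluInv M Γ c)
    (hSdisj : ∀ c ∈ S, ∀ d ∈ S, c ≠ d → Disjoint c.1 d.1) :
    (∀ c ∈ nextPart Γ M k S, CluInv M Γ c) ∧
      (∀ c ∈ nextPart Γ M k S, ∀ d ∈ nextPart Γ M k S, c ≠ d → Disjoint c.1 d.1) := by
  have hMpos : (0:ℕ) < M := by omega
  constructor
  · intro c hc
    rcases hc with ⟨R, hR, rfl⟩ | ⟨hcS, -⟩
    · by_cases hfin : R.Finite
      · -- finite run
        have hRc := hR
        obtain ⟨p, hp, hRdef, -⟩ := hRc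
        have hpR : p ∈ R := by rw [hRdef]; exact ⟨hp, Relation.ReflTransGen.refl⟩
        have hRB : R ⊆ {q ∈ S | k + 1 ≤ q.2} := by rw [hRdef]; exact aux14_runOf_subset
        have hqinv : ∀ q ∈ R, CluInv M Γ q := fun q hq => hSinv q (hRB hq).1
        have hUfin : (⋃ q ∈ R, q.1).Finite := hfin.biUnion fun q hq => (hqinv q hq).finite
        have hUne : (⋃ q ∈ R, q.1).Nonempty := by
          obtain ⟨x, hx⟩ := aux14_B_nonempty hSinv (hRB hpR)
          exact ⟨x, Set.mem_biUnion hpR hx⟩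
        refine ⟨Set.inter_subset_right, ⟨_, _, rfl⟩, fun _ => ?_, ?_⟩
        · -- nonempty
          obtain ⟨x, hx⟩ := hUne
          refine ⟨x, ⟨?_, ?_⟩⟩
          · exact ⟨Nat.sInf_le hx, le_csSup hUfin.bddAbove hx⟩
          · obtain ⟨q, hq, hxq⟩ : ∃ q ∈ R, x ∈ q.1 := by simpa using hx
            exact (hqinv q hq).subset hxq
        · exact aux14_run_diam hM hΓ hSinv hSdisj hR hfin
      · -- infinite run
        obtain ⟨hempty, hmass0⟩ := aux14_run_infinite hΓ hSinv hSdisj hR hfin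
        constructor
        · show (spanI (⋃ q ∈ R, q.1) ∩ Γ) ⊆ Γ
          exact Set.inter_subset_right
        · exact ⟨1, 0, by rw [show (runClu Γ k R).1 = ∅ from hempty,
            Set.Icc_eq_empty (by omega : ¬ (1:ℕ) ≤ 0), Set.empty_inter]⟩
        · intro h
          rw [show (runClu Γ k R).2 = 0 from hmass0] at h
          omega
        · rw [show (runClu Γ k R).1 = ∅ from hempty]
          have h0 : sdiam (∅ : Set ℕ) ≤ 0 := aux14_sdiam_le (by simp)
          have hpos : 0 < 3 * M ^ ((runClu Γ k R).2 - 1) :=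
            Nat.mul_pos (by norm_num) (pow_pos hMpos _)
          omega
    · exact hSinv c hcS
  · intro c hc d hd hne
    rcases hc with ⟨R, hR, rfl⟩ | ⟨hcS, hckept⟩ <;>
      rcases hd with ⟨R', hR', rfl⟩ | ⟨hdS, hdkept⟩
    · -- both new
      by_cases hRR : R = R'
      · exact absurd (by rw [hRR]) hne
      by_cases hfin : R.Finite
      · by_cases hfin' : R'.Finite
        · exact aux14_runs_span_disjoint hSinv hSdisj hR hR' hRR hfin hfin'
        · rw [show (runClu Γ k R').1 = ∅ from
            (aux14_run_infinite hΓ hSinv hSdisj hR' hfin').1]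
          exact disjoint_bot_right
      · rw [show (runClu Γ k R).1 = ∅ from
          (aux14_run_infinite hΓ hSinv hSdisj hR hfin).1]
        exact disjoint_bot_left
    · -- c new, d kept
      have h := hdkept R hR
      exact (Disjoint.mono_left Set.inter_subset_left (h.symm) : _)
    · -- c kept, d new
      have h := hckept R' hR'
      exact Disjoint.mono_right Set.inter_subset_left h
    · exact hSdisj c hcS d hdS hne

lemma aux14_base (hM : 3 ≤ M) (hΓ : ∀ n ∈ Γ, 1 ≤ n) :
    (∀ c ∈ parts Γ M 0, CluInv M Γ c) ∧
      (∀ c ∈ parts Γ M 0, ∀ d ∈ parts Γ M 0, c ≠ d → Disjoint c.1 d.1) := by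
  constructor
  · rintro c ⟨x, hx, rfl⟩
    refine ⟨by simpa using hx, ⟨x, x, ?_⟩, fun _ => ⟨x, rfl⟩, ?_⟩
    · ext y
      simp only [Set.mem_singleton_iff, Set.mem_inter_iff, Set.mem_Icc]
      constructor
      · rintro rfl; exact ⟨⟨le_rfl, le_rfl⟩, hx⟩
      · rintro ⟨⟨h1, h2⟩, -⟩; omega
    · show sdiam ({x} : Set ℕ) < 3 * M ^ ((1:ℕ) - 1)
      have h0 : sdiam ({x} : Set ℕ) ≤ 0 := by
        apply aux14_sdiam_le
        rintro a rfl b rfl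
        simp [Nat.dist_self]
      have hpos : 0 < 3 * M ^ ((1:ℕ) - 1) :=
        Nat.mul_pos (by norm_num) (pow_pos (by omega) _)
      omega
  · rintro c ⟨x, hx, rfl⟩ d ⟨y, hy, rfl⟩ hne
    have hxy : x ≠ y := fun h => hne (by rw [h])
    simpa [Set.disjoint_singleton] using hxy

lemma aux14_parts_inv (hM : 3 ≤ M) (hΓ : ∀ n ∈ Γ, 1 ≤ n) :
    ∀ ℓ, (∀ c ∈ parts Γ M ℓ, CluInv M Γ c) ∧
      (∀ c ∈ parts Γ M ℓ, ∀ d ∈ parts Γ M ℓ, c ≠ d → Disjoint c.1 d.1)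
  | 0 => aux14_base hM hΓ
  | (ℓ + 1) => by
    obtain ⟨h1, h2⟩ := aux14_parts_inv hM hΓ ℓ
    exact aux14_step hM hΓ h1 h2

lemma aux14_card_le (hM : 3 ≤ M) {c : Clu} (hcinv : CluInv M Γ c) :
    Nat.card c.1 ≤ 3 * M ^ (c.2 - 1) := by
  have hfin : c.1.Finite := hcinv.finite
  rcases Set.eq_empty_or_nonempty c.1 with he | hne
  · have h0 : Nat.card c.1 = 0 := by rw [he]; simp
    omega
  · have h1 : c.1 ⊆ Set.Icc (sInf c.1) (sSup c.1) := fun x hx =>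
      ⟨Nat.sInf_le hx, le_csSup hfin.bddAbove hx⟩
    have hInf := Nat.sInf_mem hne
    have hSup := Nat.sSup_mem hne hfin.bddAbove
    have hle : sInf c.1 ≤ sSup c.1 := (h1 hInf).2
    have hcard : Nat.card c.1 ≤ sSup c.1 + 1 - sInf c.1 := by
      rw [Nat.card_coe_set_eq]
      calc c.1.ncard ≤ (Set.Icc (sInf c.1) (sSup c.1)).ncard :=
            Set.ncard_le_ncard h1 (Set.finite_Icc _ _)
        _ = sSup c.1 + 1 - sInf c.1 := by
            rw [← Finset.coe_Icc, Set.ncard_coe_finset, Nat.card_Icc]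
    have hdist : sSup c.1 - sInf c.1 ≤ sdiam c.1 := by
      have h := aux14_le_sdiam hfin.bddAbove hInf hSup
      have e : Nat.dist (sInf c.1) (sSup c.1)
          = sInf c.1 - sSup c.1 + (sSup c.1 - sInf c.1) := rfl
      omega
    have hdiam := hcinv.diam
    omega

end Aux14
theorem statement_14 (M : ℕ) (hM : 3 ≤ M) :
    (∀ (ξ : ℕ → Bool) (ℓ : ℕ), ∀ c ∈ parts (Gamma ξ) M ℓ,
      sdiam c.1 < 3 * M ^ (c.2 - 1)) ∧
    ∀ p : ℝ, 0 < p → p < 1 / (64 * (M : ℝ) ^ 2) → ∀ ξ : ℕ → Bool, GoodSeq M ξ →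
      ∀ c ∈ maxClusters (Gamma ξ) M, Nat.card c.1 ≤ 3 * M ^ (c.2 - 1) := by
  have hΓ : ∀ ξ : ℕ → Bool, ∀ n ∈ Gamma ξ, 1 ≤ n := fun ξ n hn => hn.1
  constructor
  · intro ξ ℓ c hc
    exact ((aux14_parts_inv hM (hΓ ξ) ℓ).1 c hc).diam
  · intro p hp hp' ξ hgood c hc
    obtain ⟨ℓ, hℓ⟩ := hc
    exact aux14_card_le hM ((aux14_parts_inv hM (hΓ ξ) ℓ).1 c (hℓ ℓ le_rfl))

end Paper
end

section
/- Let L ≥ 2 be an integer and Z(L) = {i ≥ 1 : (η(L))_i = 0} the set of zeroes of η(L). Then the lower and upper mass dimensions of Z(L) coincide and dim_LM(Z(L)) = dim_UM(Z(L)) = log L / log(3(L+1)). -/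
open Filter Set MeasureTheory
open scoped ENNReal NNReal

namespace Paper

/-! ### Auxiliary lemmas for the proof -/

noncomputable def Fs (L J : ℕ) : ℕ := ∑ j ∈ Finset.range J, max (tzeta L j) 1

section AuxProof
variable {L : ℕ} {η : ℕ → Bool}

lemma zetaL_def (j : ℕ) : zetaL L j = sSup {k | L ^ k ∣ j + 1} := rfl

lemma zset_nonempty (j : ℕ) : ({k | L ^ k ∣ j + 1} : Set ℕ).Nonempty := ⟨0, by simp⟩

lemma zset_bdd (hL : 2 ≤ L) (j : ℕ) : BddAbove {k | L ^ k ∣ j + 1} := by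
  refine ⟨j + 1, fun k hk => ?_⟩
  have h1 : L ^ k ≤ j + 1 := Nat.le_of_dvd (Nat.succ_pos j) hk
  have h2 := Nat.lt_pow_self (n := k) (show 1 < L by omega)
  omega

lemma zetaL_dvd (hL : 2 ≤ L) (j : ℕ) : L ^ (zetaL L j) ∣ j + 1 :=
  Nat.sSup_mem (zset_nonempty j) (zset_bdd hL j)

lemma zetaL_eq_zero_iff (hL : 2 ≤ L) (j : ℕ) : zetaL L j = 0 ↔ ¬ L ∣ j + 1 := by
  constructor
  · intro h hdvd
    have h1 : (1 : ℕ) ∈ {k | L ^ k ∣ j + 1} := by simpa using hdvd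
    have h2 := le_csSup (zset_bdd hL j) h1
    rw [← zetaL_def] at h2
    omega
  · intro h
    by_contra h0
    exact h ((dvd_pow_self L h0).trans (zetaL_dvd hL j))

lemma zetaL_pow (hL : 2 ≤ L) (K : ℕ) : zetaL L (L ^ K - 1) = K := by
  have hp : 1 ≤ L ^ K := Nat.one_le_pow _ _ (by omega)
  have he : L ^ K - 1 + 1 = L ^ K := by omega
  have hs : {k | L ^ k ∣ L ^ K - 1 + 1} = Set.Iic K := by
    ext k
    simp [he, Set.mem_Iic, Nat.pow_dvd_pow_iff_le_right (show 1 < L by omega)]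
  rw [zetaL_def, hs, csSup_Iic]

lemma tzeta_eq_zero_iff (hL : 2 ≤ L) (j : ℕ) : tzeta L j = 0 ↔ ¬ L ∣ j + 1 := by
  rw [← zetaL_eq_zero_iff hL]
  unfold tzeta
  split
  · rename_i h; simp [h]
  · rename_i h
    have : 0 < 3 * (3 * (L + 1)) ^ (zetaL L j - 1) := by positivity
    constructor
    · intro h2; omega
    · intro h2; exact absurd h2 h

lemma card_dvd_filter (d N : ℕ) :
    ((Finset.range N).filter (fun j => d ∣ (j + 1))).card = N / d := by
  rw [← Nat.Ioc_filter_dvd_card_eq_div N d]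
  refine Finset.card_bij' (fun j _ => j + 1) (fun m _ => m - 1) ?_ ?_ ?_ ?_
  · intro a ha
    simp only [Finset.mem_filter, Finset.mem_range] at ha
    simp only [Finset.mem_filter, Finset.mem_Ioc]
    exact ⟨⟨Nat.succ_pos a, ha.1⟩, ha.2⟩
  · intro a ha
    simp only [Finset.mem_filter, Finset.mem_Ioc] at ha
    simp only [Finset.mem_filter, Finset.mem_range]
    refine ⟨by omega, ?_⟩
    have h : a - 1 + 1 = a := by omega
    rw [h]; exact ha.2
  · intro a _; simp
  · intro a ha
    simp only [Finset.mem_filter, Finset.mem_Ioc] at ha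
    omega



lemma card_not_dvd_filter (L N : ℕ) :
    ((Finset.range N).filter (fun j => ¬ L ∣ (j + 1))).card = N - N / L := by
  have h := Finset.card_filter_add_card_filter_not
    (s := Finset.range N) (p := fun j => L ∣ (j + 1))
  rw [card_dvd_filter] at h
  have h2 : N / L ≤ N := Nat.div_le_self N L
  simp only [Finset.card_range] at h
  omega



lemma le_Fs (J : ℕ) : J ≤ Fs L J := by
  have h : ∑ _j ∈ Finset.range J, 1 ≤ Fs L J :=
    Finset.sum_le_sum (fun i _ => le_max_right _ 1)
  simpa using h

lemma Fs_strictMono : StrictMono (Fs L) := by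
  apply strictMono_nat_of_lt_succ
  intro n
  have : Fs L (n + 1) = Fs L n + max (tzeta L n) 1 := Finset.sum_range_succ _ n
  have h2 : 1 ≤ max (tzeta L n) 1 := le_max_right _ 1
  omega

lemma Fs_lower (hL : 2 ≤ L) {J : ℕ} (hJ : 1 ≤ J) :
    (3 * (L + 1)) ^ (Nat.log L J - 1) ≤ Fs L J := by
  set K := Nat.log L J with hK
  rcases Nat.eq_zero_or_pos K with h0 | hKpos
  · rw [h0]
    simpa using le_trans hJ (le_Fs J)
  · have hpow : L ^ K ≤ J := Nat.pow_log_le_self L (by omega)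
    have hp1 : 1 ≤ L ^ K := Nat.one_le_pow _ _ (by omega)
    have hj : L ^ K - 1 ∈ Finset.range J := by
      simp only [Finset.mem_range]; omega
    have hval : tzeta L (L ^ K - 1) = 3 * (3 * (L + 1)) ^ (K - 1) := by
      unfold tzeta
      rw [zetaL_pow hL, if_neg (by omega)]
    have h1 : (3 * (L + 1)) ^ (K - 1) ≤ max (tzeta L (L ^ K - 1)) 1 := by
      rw [hval]
      calc (3 * (L + 1)) ^ (K - 1) ≤ 3 * (3 * (L + 1)) ^ (K - 1) := by omega
        _ ≤ _ := le_max_left _ 1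
    refine le_trans h1 ?_
    unfold Fs
    exact Finset.single_le_sum (f := fun j => max (tzeta L j) 1) (fun i _ => Nat.zero_le _) hj

lemma gsum_le (hL : 2 ≤ L) (K : ℕ) :
    ∑ k ∈ Finset.Icc 1 K, (3 * (L + 1)) ^ (k - 1) * L ^ (K + 1 - k) ≤ (3 * (L + 1)) ^ K := by
  induction K with
  | zero => simp
  | succ K ih =>
    rw [Finset.sum_Icc_succ_top (by omega)]
    have he : ∑ k ∈ Finset.Icc 1 K, (3 * (L + 1)) ^ (k - 1) * L ^ (K + 1 + 1 - k)
        = L * ∑ k ∈ Finset.Icc 1 K, (3 * (L + 1)) ^ (k - 1) * L ^ (K + 1 - k) := by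
      rw [Finset.mul_sum]
      apply Finset.sum_congr rfl
      intro k hk
      simp only [Finset.mem_Icc] at hk
      have h3 : K + 1 + 1 - k = (K + 1 - k) + 1 := by omega
      rw [h3, pow_succ]; ring
    rw [he]
    have e1 : K + 1 - 1 = K := by omega
    have e2 : K + 1 + 1 - (K + 1) = 1 := by omega
    rw [e1, e2, pow_one]
    have h5 : L * ∑ k ∈ Finset.Icc 1 K, (3 * (L + 1)) ^ (k - 1) * L ^ (K + 1 - k)
        ≤ L * (3 * (L + 1)) ^ K := Nat.mul_le_mul_left L ih
    have h6 : (3 * (L + 1)) ^ (K + 1) = (3 * (L + 1)) ^ K * (3 * (L + 1)) := pow_succ _ _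
    nlinarith [Nat.one_le_pow K (3 * (L + 1)) (by omega)]

lemma tzeta_le_sum (hL : 2 ≤ L) {J j : ℕ} (hj : j < J) :
    tzeta L j ≤ ∑ k ∈ Finset.Icc 1 (Nat.log L J),
      (if L ^ k ∣ j + 1 then 3 * (3 * (L + 1)) ^ (k - 1) else 0) := by
  by_cases hz : zetaL L j = 0
  · have : tzeta L j = 0 := by unfold tzeta; rw [if_pos hz]
    rw [this]; exact Nat.zero_le _
  · set z := zetaL L j with hzd
    have hdvd : L ^ z ∣ j + 1 := zetaL_dvd hL j
    have hle : L ^ z ≤ j + 1 := Nat.le_of_dvd (by omega) hdvd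
    have hzK : z ≤ Nat.log L J := by
      rw [Nat.le_log_iff_pow_le (by omega) (show J ≠ 0 by omega)]
      omega
    have hmem : z ∈ Finset.Icc 1 (Nat.log L J) := by
      simp only [Finset.mem_Icc]; omega
    have hval : tzeta L j = (if L ^ z ∣ j + 1 then 3 * (3 * (L + 1)) ^ (z - 1) else 0) := by
      rw [if_pos hdvd]; unfold tzeta; rw [if_neg hz]
    rw [hval]
    exact Finset.single_le_sum
      (f := fun k => if L ^ k ∣ j + 1 then 3 * (3 * (L + 1)) ^ (k - 1) else 0)
      (fun i _ => Nat.zero_le _) hmem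

lemma Fs_upper (hL : 2 ≤ L) {J : ℕ} (hJ : 1 ≤ J) :
    Fs L J ≤ J + 3 * (3 * (L + 1)) ^ (Nat.log L J) := by
  set K := Nat.log L J with hK
  have h1 : Fs L J ≤ J + ∑ j ∈ Finset.range J, tzeta L j := by
    unfold Fs
    calc ∑ j ∈ Finset.range J, max (tzeta L j) 1
        ≤ ∑ j ∈ Finset.range J, (1 + tzeta L j) :=
          Finset.sum_le_sum (fun i _ => by omega)
      _ = J + ∑ j ∈ Finset.range J, tzeta L j := by
          rw [Finset.sum_add_distrib]; simp
  have h2 : ∑ j ∈ Finset.range J, tzeta L j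
      ≤ ∑ j ∈ Finset.range J, ∑ k ∈ Finset.Icc 1 K,
          (if L ^ k ∣ j + 1 then 3 * (3 * (L + 1)) ^ (k - 1) else 0) := by
    apply Finset.sum_le_sum
    intro j hj
    exact tzeta_le_sum hL (Finset.mem_range.mp hj)
  rw [Finset.sum_comm] at h2
  have h3 : ∀ k ∈ Finset.Icc 1 K, ∑ j ∈ Finset.range J,
      (if L ^ k ∣ j + 1 then 3 * (3 * (L + 1)) ^ (k - 1) else 0)
      ≤ 3 * ((3 * (L + 1)) ^ (k - 1) * L ^ (K + 1 - k)) := by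
    intro k hk
    simp only [Finset.mem_Icc] at hk
    rw [← Finset.sum_filter, Finset.sum_const, smul_eq_mul, card_dvd_filter]
    have hJlt : J < L ^ (K + 1) := Nat.lt_pow_succ_log_self (by omega) J
    have hdiv : J / L ^ k ≤ L ^ (K + 1 - k) := by
      calc J / L ^ k ≤ L ^ (K + 1) / L ^ k :=
            Nat.div_le_div_right (le_of_lt hJlt)
        _ = L ^ (K + 1 - k) := Nat.pow_div (by omega) (by omega)
    calc J / L ^ k * (3 * (3 * (L + 1)) ^ (k - 1))
        = 3 * ((3 * (L + 1)) ^ (k - 1) * (J / L ^ k)) := by ring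
      _ ≤ 3 * ((3 * (L + 1)) ^ (k - 1) * L ^ (K + 1 - k)) := by
          exact Nat.mul_le_mul_left 3 (Nat.mul_le_mul_left _ hdiv)
  have h4 : ∑ k ∈ Finset.Icc 1 K, ∑ j ∈ Finset.range J,
      (if L ^ k ∣ j + 1 then 3 * (3 * (L + 1)) ^ (k - 1) else 0)
      ≤ 3 * (3 * (L + 1)) ^ K := by
    calc ∑ k ∈ Finset.Icc 1 K, ∑ j ∈ Finset.range J,
          (if L ^ k ∣ j + 1 then 3 * (3 * (L + 1)) ^ (k - 1) else 0)
        ≤ ∑ k ∈ Finset.Icc 1 K, 3 * ((3 * (L + 1)) ^ (k - 1) * L ^ (K + 1 - k)) :=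
          Finset.sum_le_sum h3
      _ = 3 * ∑ k ∈ Finset.Icc 1 K, (3 * (L + 1)) ^ (k - 1) * L ^ (K + 1 - k) := by
          rw [Finset.mul_sum]
      _ ≤ 3 * (3 * (L + 1)) ^ K := Nat.mul_le_mul_left 3 (gsum_le hL K)
  omega



lemma exists_false (hη : Xinf η) (n : ℕ) : ∃ k, η (n + k) = false := by
  obtain ⟨m, hm, h⟩ := hη.2 n
  exact ⟨m - n, by rwa [Nat.add_sub_cancel' hm]⟩

lemma runLen_spec (hη : Xinf η) (n : ℕ) :
    η (n + runLen η n) = false ∧ ∀ t, t < runLen η n → η (n + t) = true := by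
  have h := exists_false hη n
  unfold runLen
  rw [dif_pos h]
  refine ⟨Nat.find_spec h, fun t ht => ?_⟩
  have := Nat.find_min h ht
  simpa using this

lemma fpos_eq (hf : fmap η = tzeta L) : ∀ J, fpos η J = Fs L J := by
  intro J
  induction J with
  | zero => simp [fpos, Fs]
  | succ J ih =>
    have h1 : fpos η (J + 1) = fpos η J + max (runLen η (fpos η J)) 1 := rfl
    have h2 : runLen η (fpos η J) = tzeta L J := congrFun hf J
    rw [h1, h2, ih]
    unfold Fs
    rw [Finset.sum_range_succ]

lemma exists_interval (i : ℕ) : ∃ j, Fs L j ≤ i ∧ i < Fs L (j + 1) := by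
  classical
  set j := Nat.findGreatest (fun J => Fs L J ≤ i) i with hj
  have hP0 : Fs L 0 ≤ i := by simp [Fs]
  have hspec : Fs L j ≤ i := Nat.findGreatest_spec (P := fun J => Fs L J ≤ i) (Nat.zero_le i) hP0
  refine ⟨j, hspec, ?_⟩
  by_contra hcon
  push_neg at hcon
  have hji : j + 1 ≤ i := le_trans (le_Fs (j + 1)) hcon
  exact (Nat.findGreatest_is_greatest (Nat.lt_succ_self j) hji) hcon

lemma massCount_Fs (hL : 2 ≤ L) (hη : Xinf η) (hf : fmap η = tzeta L) (N : ℕ) :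
    massCount {i | η i = false} (Fs L N) = N - N / L := by
  classical
  have hset : {a : ℕ | a ∈ {i | η i = false} ∧ a < Fs L N}
      = ↑(((Finset.range N).filter (fun j => tzeta L j = 0)).image (Fs L)) := by
    ext i
    simp only [Set.mem_setOf_eq, Finset.coe_image, Set.mem_image, Finset.mem_coe,
      Finset.mem_filter, Finset.mem_range]
    constructor
    · rintro ⟨hfalse, hlt⟩
      obtain ⟨j, hj1, hj2⟩ := exists_interval (L := L) i
      have hFj1 : Fs L (j + 1) = Fs L j + max (tzeta L j) 1 := Finset.sum_range_succ _ j
      by_cases hz : tzeta L j = 0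
      · have hij : i = Fs L j := by
          rw [hFj1, hz] at hj2; simp at hj2; omega
        have hjN : j < N := by
          have := hlt
          rw [hij] at this
          exact Fs_strictMono.lt_iff_lt.mp this
        exact ⟨j, ⟨hjN, hz⟩, hij.symm⟩
      · exfalso
        have hrun : runLen η (fpos η j) = tzeta L j := congrFun hf j
        have htrue := (runLen_spec hη (fpos η j)).2 (i - Fs L j) (by
          rw [hrun]
          rw [hFj1] at hj2
          omega)
        rw [fpos_eq hf, Nat.add_sub_cancel' hj1] at htrue
        rw [hfalse] at htrue
        exact Bool.false_ne_true htrue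
    · rintro ⟨j, ⟨hjN, hz⟩, rfl⟩
      constructor
      · have hrun : runLen η (fpos η j) = 0 := by
          show fmap η j = 0
          rw [hf]; exact hz
        have := (runLen_spec hη (fpos η j)).1
        rw [hrun, Nat.add_zero, fpos_eq hf] at this
        exact this
      · exact Fs_strictMono hjN
  rw [massCount, hset, Nat.card_coe_set_eq, Set.ncard_coe_finset,
    Finset.card_image_of_injective _ Fs_strictMono.injective]
  rw [Finset.filter_congr (fun j _ => by rw [tzeta_eq_zero_iff hL])]
  exact card_not_dvd_filter L N

lemma massCount_mono (A : Set ℕ) {n m : ℕ} (h : n ≤ m) : massCount A n ≤ massCount A m := by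
  apply Nat.card_mono
  · exact Set.Finite.subset (Set.finite_Iio m) (fun a ha => ha.2)
  · exact fun a ha => ⟨ha.1, lt_of_lt_of_le ha.2 h⟩



lemma tendsto_ratio (a b c d : ℝ) (hc : 0 < c) :
    Tendsto (fun x : ℝ => (x * a + b) / (x * c + d)) atTop (nhds (a / c)) := by
  have hden : Tendsto (fun x : ℝ => x * c + d) atTop atTop :=
    (tendsto_id.atTop_mul_const hc).atTop_add tendsto_const_nhds
  have heq : ∀ᶠ x : ℝ in atTop, (x * a + b) / (x * c + d) = (a + b / x) / (c + d / x) := by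
    filter_upwards [eventually_gt_atTop 0, hden.eventually_ge_atTop 1] with x hx hx1
    have hx0 : x ≠ 0 := ne_of_gt hx
    have hxc : x * c + d ≠ 0 := by linarith
    have hcd : c + d / x ≠ 0 := by
      have : c + d / x = (x * c + d) / x := by field_simp
      rw [this]
      exact div_ne_zero hxc hx0
    rw [div_eq_div_iff hxc hcd]
    field_simp
  have hnum : Tendsto (fun x : ℝ => a + b / x) atTop (nhds (a + 0)) :=
    tendsto_const_nhds.add (tendsto_const_nhds.div_atTop tendsto_id)
  have hden2 : Tendsto (fun x : ℝ => c + d / x) atTop (nhds (c + 0)) :=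
    tendsto_const_nhds.add (tendsto_const_nhds.div_atTop tendsto_id)
  have h := hnum.div hden2 (by simpa using ne_of_gt hc)
  rw [add_zero, add_zero] at h
  exact h.congr' (by filter_upwards [heq] with x hx; exact hx.symm)

lemma tendsto_ratio_nat (a b c d : ℝ) (hc : 0 < c) :
    Tendsto (fun k : ℕ => ((k : ℝ) * a + b) / ((k : ℝ) * c + d)) atTop (nhds (a / c)) :=
  (tendsto_ratio a b c d hc).comp tendsto_natCast_atTop_atTop



/-- The index of the interval `[Fs L J, Fs L (J+1))` containing `n`. -/
noncomputable def Jfun (L n : ℕ) : ℕ := Nat.findGreatest (fun J => Fs L J ≤ n) n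

/-- The `Nat.log` scale of `Jfun`. -/
noncomputable def Kfun (L n : ℕ) : ℕ := Nat.log L (Jfun L n)

lemma Jfun_spec {n : ℕ} (hn : Fs L 1 ≤ n) :
    1 ≤ Jfun L n ∧ Fs L (Jfun L n) ≤ n ∧ n < Fs L (Jfun L n + 1) := by
  classical
  have hn1 : 1 ≤ n := le_trans (le_Fs 1) hn
  have h1 : 1 ≤ Jfun L n := Nat.le_findGreatest hn1 hn
  have h2 : Fs L (Jfun L n) ≤ n :=
    Nat.findGreatest_spec (P := fun J => Fs L J ≤ n) hn1 hn
  refine ⟨h1, h2, ?_⟩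
  by_contra hcon
  push_neg at hcon
  have h3 : Jfun L n + 1 ≤ n := le_trans (le_Fs _) hcon
  exact Nat.findGreatest_is_greatest (Nat.lt_succ_self _) h3 hcon

lemma Jfun_tendsto : Tendsto (Jfun L) atTop atTop := by
  classical
  rw [tendsto_atTop]
  intro b
  filter_upwards [eventually_ge_atTop (max b (Fs L b))] with n hn
  exact Nat.le_findGreatest (le_trans (le_max_left _ _) hn)
    (le_trans (le_max_right _ _) hn)

lemma Kfun_tendsto (hL : 2 ≤ L) : Tendsto (Kfun L) atTop atTop := by
  rw [tendsto_atTop]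
  intro b
  filter_upwards [Jfun_tendsto.eventually_ge_atTop (L ^ b)] with n hn
  have h1 : 1 ≤ L ^ b := Nat.one_le_pow _ _ (by omega)
  exact (Nat.le_log_iff_pow_le (by omega) (by omega)).mpr hn

lemma key_bounds (hL : 2 ≤ L) (hη : Xinf η) (hf : fmap η = tzeta L) {n : ℕ}
    (hn : Fs L 1 ≤ n) :
    L ^ (Kfun L n) ≤ 2 * massCount {i | η i = false} n ∧
    massCount {i | η i = false} n ≤ L ^ (Kfun L n + 1) ∧
    (3 * (L + 1)) ^ (Kfun L n - 1) ≤ n ∧ n ≤ (3 * (L + 1)) ^ (Kfun L n + 2) := by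
  obtain ⟨hJ1, hFl, hFu⟩ := Jfun_spec hn
  obtain ⟨J, hJdef⟩ : ∃ J, Jfun L n = J := ⟨_, rfl⟩
  have hKdef : Kfun L n = Nat.log L J := by rw [Kfun, hJdef]
  rw [hJdef] at hJ1 hFl hFu
  rw [hKdef]
  obtain ⟨K, hK⟩ : ∃ K, Nat.log L J = K := ⟨_, rfl⟩
  rw [hK]
  have hMK1 : (3 * (L + 1)) ^ (K - 1) ≤ n := by
    refine le_trans ?_ hFl
    rw [← hK]
    exact Fs_lower hL hJ1
  have hJlt : J < L ^ (K + 1) := by rw [← hK]; exact Nat.lt_pow_succ_log_self (by omega) J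
  have hFs_succ : Fs L (J + 1) ≤ (3 * (L + 1)) ^ (K + 2) := by
    have hlog : Nat.log L (J + 1) ≤ K + 1 := by
      calc Nat.log L (J + 1) ≤ Nat.log L (L ^ (K + 1)) := Nat.log_mono_right (by omega)
        _ = K + 1 := Nat.log_pow (by omega) _
    have h1 := Fs_upper hL (show 1 ≤ J + 1 by omega)
    have h2 : (3 : ℕ) * (3 * (L + 1)) ^ (Nat.log L (J + 1)) ≤ 3 * (3 * (L + 1)) ^ (K + 1) :=
      Nat.mul_le_mul_left 3 (Nat.pow_le_pow_right (by omega) hlog)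
    have h3 : L ^ (K + 1) ≤ (3 * (L + 1)) ^ (K + 1) := Nat.pow_le_pow_left (by omega) _
    have h4 : Fs L (J + 1) ≤ 4 * (3 * (L + 1)) ^ (K + 1) := by omega
    calc Fs L (J + 1) ≤ 4 * (3 * (L + 1)) ^ (K + 1) := h4
      _ ≤ (3 * (L + 1)) ^ (K + 1) * (3 * (L + 1)) := by
          nlinarith [Nat.one_le_pow (K + 1) (3 * (L + 1)) (by omega : 0 < 3 * (L + 1))]
      _ = (3 * (L + 1)) ^ (K + 2) := by ring
  have hn_le : n ≤ (3 * (L + 1)) ^ (K + 2) := le_trans (le_of_lt hFu) hFs_succ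
  have hZl : J - J / L ≤ massCount {i | η i = false} n := by
    have h := massCount_mono {i | η i = false} hFl
    rwa [massCount_Fs hL hη hf] at h
  have hZu : massCount {i | η i = false} n ≤ (J + 1) - (J + 1) / L := by
    have h := massCount_mono {i | η i = false} (le_of_lt hFu)
    rwa [massCount_Fs hL hη hf] at h
  have hLKJ : L ^ K ≤ J := by rw [← hK]; exact Nat.pow_log_le_self L (by omega)
  have hdivJ : J / L ≤ J / 2 := Nat.div_le_div_left hL (by omega)
  have hd2 : J / 2 * 2 ≤ J := Nat.div_mul_le_self J 2
  have h5 : J ≤ 2 * (J - J / L) := by omega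
  have hz1 : L ^ K ≤ 2 * massCount {i | η i = false} n := by omega
  have h8 : (J + 1) - (J + 1) / L ≤ J + 1 := Nat.sub_le _ _
  have hz2 : massCount {i | η i = false} n ≤ L ^ (K + 1) := by omega
  exact ⟨hz1, hz2, hMK1, hn_le⟩

end AuxProof

theorem statement_19 (L : ℕ) (hL : 2 ≤ L) (η : ℕ → Bool) (hη : Xinf η)
    (hf : fmap η = tzeta L) :
    Filter.liminf
        (fun n : ℕ => Real.log (massCount {i | η i = false} n) / Real.log n) atTop
      = Real.log L / Real.log (3 * (L + 1)) ∧
    Filter.limsup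
        (fun n : ℕ => Real.log (massCount {i | η i = false} n) / Real.log n) atTop
      = Real.log L / Real.log (3 * (L + 1)) := by
  have hL1 : 1 < L := by omega
  set lnL : ℝ := Real.log L with hlnLdef
  set lnM : ℝ := Real.log (3 * ((L : ℝ) + 1)) with hlnMdef
  have hMcast : (((3 * (L + 1) : ℕ)) : ℝ) = 3 * ((L : ℝ) + 1) := by push_cast; ring
  have hlnMM : Real.log ((3 * (L + 1) : ℕ) : ℝ) = lnM := by rw [hMcast]
  have hlnL : 0 < lnL := by
    rw [hlnLdef]; exact Real.log_pos (by exact_mod_cast hL1)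
  have hlnM : 0 < lnM := by
    rw [← hlnMM]
    exact Real.log_pos (by exact_mod_cast (by omega : 1 < 3 * (L + 1)))
  clear_value lnL lnM
  have hg1K : Tendsto (fun n => (((Kfun L n) : ℝ) * lnL + (-Real.log 2)) /
      (((Kfun L n) : ℝ) * lnM + 2 * lnM)) atTop (nhds (lnL / lnM)) :=
    (tendsto_ratio_nat lnL (-Real.log 2) lnM (2 * lnM) hlnM).comp (Kfun_tendsto hL)
  have hg2K : Tendsto (fun n => (((Kfun L n) : ℝ) * lnL + lnL) /
      (((Kfun L n) : ℝ) * lnM + (-lnM))) atTop (nhds (lnL / lnM)) :=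
    (tendsto_ratio_nat lnL lnL lnM (-lnM) hlnM).comp (Kfun_tendsto hL)
  have hbound : ∀ᶠ n in atTop,
      (((Kfun L n) : ℝ) * lnL + (-Real.log 2)) / (((Kfun L n) : ℝ) * lnM + 2 * lnM)
        ≤ Real.log (massCount {i | η i = false} n) / Real.log n ∧
      Real.log (massCount {i | η i = false} n) / Real.log n
        ≤ (((Kfun L n) : ℝ) * lnL + lnL) / (((Kfun L n) : ℝ) * lnM + (-lnM)) := by
    filter_upwards [eventually_ge_atTop (Fs L 1), (Kfun_tendsto hL).eventually_ge_atTop 2]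
      with n hn hK2
    obtain ⟨hz1, hz2, hn1, hn2⟩ := key_bounds hL hη hf hn
    obtain ⟨K, hKdef⟩ : ∃ K, Kfun L n = K := ⟨_, rfl⟩
    rw [hKdef] at hz1 hz2 hn1 hn2 hK2 ⊢
    obtain ⟨Z, hZdef⟩ : ∃ Z, massCount {i | η i = false} n = Z := ⟨_, rfl⟩
    rw [hZdef] at hz1 hz2 ⊢
    have hZ1 : 1 ≤ Z := by
      have h1 : 1 ≤ L ^ K := Nat.one_le_pow _ _ (by omega)
      omega
    have hM2 : 2 ≤ (3 * (L + 1)) ^ (K - 1) := by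
      have h1 : 3 * (L + 1) ≤ (3 * (L + 1)) ^ (K - 1) := Nat.le_self_pow (by omega) _
      omega
    have hn2' : 2 ≤ n := le_trans hM2 hn1
    have hlogn_pos : 0 < Real.log n :=
      Real.log_pos (by exact_mod_cast (by omega : 1 < n))
    have hZr : (0 : ℝ) ≤ Real.log Z := Real.log_nonneg (by exact_mod_cast hZ1)
    have hlogZ_lb : (K : ℝ) * lnL - Real.log 2 ≤ Real.log Z := by
      have hcast : ((L : ℝ)) ^ K ≤ 2 * (Z : ℝ) := by exact_mod_cast hz1
      have hlog := Real.log_le_log (by positivity) hcast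
      rw [Real.log_mul (by norm_num) (by exact_mod_cast (by omega : Z ≠ 0)),
        Real.log_pow, ← hlnLdef] at hlog
      linarith
    have hlogZ_ub : Real.log Z ≤ ((K : ℝ) + 1) * lnL := by
      have hcast : (Z : ℝ) ≤ (L : ℝ) ^ (K + 1) := by exact_mod_cast hz2
      have hlog := Real.log_le_log (by exact_mod_cast hZ1) hcast
      rw [Real.log_pow, ← hlnLdef] at hlog
      push_cast at hlog
      linarith
    have hlogn_lb : ((K : ℝ) - 1) * lnM ≤ Real.log n := by
      have hcast : (((3 * (L + 1) : ℕ)) : ℝ) ^ (K - 1) ≤ (n : ℝ) := by exact_mod_cast hn1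
      have hlog := Real.log_le_log (by positivity) hcast
      rw [Real.log_pow, hlnMM] at hlog
      have he : ((K - 1 : ℕ) : ℝ) = (K : ℝ) - 1 := by
        have h1 : 1 ≤ K := by omega
        push_cast [Nat.cast_sub h1]
        ring
      rw [he] at hlog
      linarith
    have hlogn_ub : Real.log n ≤ ((K : ℝ) + 2) * lnM := by
      have hcast : (n : ℝ) ≤ (((3 * (L + 1) : ℕ)) : ℝ) ^ (K + 2) := by exact_mod_cast hn2
      have hlog := Real.log_le_log (by positivity) hcast
      rw [Real.log_pow, hlnMM] at hlog
      push_cast at hlog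
      linarith
    have hK2' : (2 : ℝ) ≤ (K : ℝ) := by exact_mod_cast hK2
    constructor
    · apply div_le_div₀ hZr (by linarith) hlogn_pos (by linarith)
    · apply div_le_div₀ (by nlinarith) (by linarith) (by nlinarith) (by linarith)
  have hlim : Tendsto
      (fun n : ℕ => Real.log (massCount {i | η i = false} n) / Real.log n) atTop
      (nhds (lnL / lnM)) :=
    tendsto_of_tendsto_of_tendsto_of_le_of_le' hg1K hg2K
      (hbound.mono fun n h => h.1) (hbound.mono fun n h => h.2)
  exact ⟨hlim.liminf_eq, hlim.limsup_eq⟩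

end Paper
end
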